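/- arXiv:2410.18530 — 18 statements merged into one kernel-verified Lean document; each statement's English description precedes it below -/
import Mathlib

section
/- A matrix H ∈ M₂(ℂ) is normal, i.e. H·H† = H†·H, if and only if h_R × h_I = 0, where × denotes the cross product in ℝ³. -/
open Matrix Complex

noncomputable section

/-- The 2×2 complex matrix with Pauli decomposition `h⁰·I + h¹σ₁ + h²σ₂ + h³σ₃`. -/
def pauliM (h0 h1 h2 h3 : ℂ) : Matrix (Fin 2) (Fin 2) ℂ :=
  !![h0 + h3, h1 - Complex.I * h2; h1 + Complex.I * h2, h0 - h3]

/-- The real part `h_R` of the Pauli vector. -/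
def vecR (h1 h2 h3 : ℂ) : Fin 3 → ℝ := ![h1.re, h2.re, h3.re]

/-- The imaginary part `h_I` of the Pauli vector. -/
def vecI (h1 h2 h3 : ℂ) : Fin 3 → ℝ := ![h1.im, h2.im, h3.im]

/-- `H` is normal iff `h_R ×₃ h_I = 0`. -/
theorem stmt_0 (H : Matrix (Fin 2) (Fin 2) ℂ) (h0 h1 h2 h3 : ℂ)
    (hH : H = pauliM h0 h1 h2 h3) :
    H * Hᴴ = Hᴴ * H ↔ crossProduct (vecR h1 h2 h3) (vecI h1 h2 h3) = 0 := by
  subst hH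
  constructor
  · intro h
    have e00 := congrFun (congrFun h 0) 0
    have e01 := congrFun (congrFun h 0) 1
    simp [pauliM, mul_apply, Fin.sum_univ_two, conjTranspose_apply,
      Complex.ext_iff, Complex.mul_re, Complex.mul_im] at e00 e01
    obtain ⟨a1, a2⟩ := e01
    funext i
    fin_cases i <;>
      simp [crossProduct, vecR, vecI] <;>
      linear_combination (norm := ring_nf) (0:ℝ)*a1 <;>
      linarith [e00, a1, a2]
  · intro h
    have c1 := congrFun h 0
    have c2 := congrFun h 1
    have c3 := congrFun h 2
    simp [crossProduct, vecR, vecI] at c1 c2 c3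
    ext i j
    fin_cases i <;> fin_cases j <;>
      simp [pauliM, mul_apply, Fin.sum_univ_two, conjTranspose_apply,
        Complex.ext_iff, Complex.mul_re, Complex.mul_im] <;>
      constructor <;> linear_combination (norm := ring_nf) (0:ℝ)*c1 <;>
      linarith [c1, c2, c3]
end
end

section
/- A matrix H ∈ M₂(ℂ) satisfies H†·H = H·H† = det(H)·I if and only if h⁰_I = 0 and h_R = 0, i.e. if and only if H = h⁰_R·I + i(h¹_I σ₁ + h²_I σ₂ + h³_I σ₃) with h⁰_R ∈ ℝ and h_I ∈ ℝ³. -/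
open Matrix Complex

noncomputable section

set_option maxHeartbeats 1000000 in
/-- `H†H = HH† = det(H)·I` iff `h⁰_I = 0` and `h_R = 0`. -/
theorem stmt_1 (H : Matrix (Fin 2) (Fin 2) ℂ) (h0 h1 h2 h3 : ℂ)
    (hH : H = pauliM h0 h1 h2 h3) :
    (Hᴴ * H = H.det • (1 : Matrix (Fin 2) (Fin 2) ℂ) ∧
      H * Hᴴ = H.det • (1 : Matrix (Fin 2) (Fin 2) ℂ)) ↔
    (h0.im = 0 ∧ vecR h1 h2 h3 = 0) := by
  subst hH
  constructor
  · rintro ⟨hA, hB⟩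
    have e1 := congr_arg Complex.re (congr_fun (congr_fun hA 0) 0)
    have e2 := congr_arg Complex.re (congr_fun (congr_fun hA 1) 1)
    have e3 := congr_arg Complex.re (congr_fun (congr_fun hB 0) 0)
    have e4 := congr_arg Complex.re (congr_fun (congr_fun hB 1) 1)
    simp only [pauliM, Matrix.mul_apply, Matrix.conjTranspose_apply, Matrix.det_fin_two,
      Fin.sum_univ_two, Matrix.cons_val', Matrix.cons_val_zero, Matrix.cons_val_one,
      Matrix.head_cons, Matrix.head_fin_const, Matrix.empty_val', Matrix.cons_val_fin_one,
      Matrix.smul_apply, Matrix.one_apply_eq, Matrix.of_apply, smul_eq_mul, mul_one,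
      Complex.add_re, Complex.sub_re, Complex.mul_re, Complex.mul_im, Complex.add_im,
      Complex.sub_im, Complex.conj_re, Complex.conj_im, Complex.I_re, Complex.I_im, Complex.neg_re, Complex.neg_im,
      Complex.star_def, map_add, map_sub, _root_.map_mul, Complex.conj_I] at e1 e2 e3 e4
    have key : h0.im ^ 2 + h1.re ^ 2 + h2.re ^ 2 + h3.re ^ 2 = 0 := by linear_combination (e1 + e2 + e3 + e4) / 8
    have hb : h0.im = 0 := by nlinarith [sq_nonneg h0.im, sq_nonneg h1.re, sq_nonneg h2.re, sq_nonneg h3.re]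
    have h1r : h1.re = 0 := by nlinarith [sq_nonneg h0.im, sq_nonneg h1.re, sq_nonneg h2.re, sq_nonneg h3.re]
    have h2r : h2.re = 0 := by nlinarith [sq_nonneg h0.im, sq_nonneg h1.re, sq_nonneg h2.re, sq_nonneg h3.re]
    have h3r : h3.re = 0 := by nlinarith [sq_nonneg h0.im, sq_nonneg h1.re, sq_nonneg h2.re, sq_nonneg h3.re]
    refine ⟨hb, ?_⟩
    funext i
    fin_cases i <;> simp [vecR, h1r, h2r, h3r]
  · rintro ⟨hb, hR⟩
    have h1r : h1.re = 0 := congr_fun hR 0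
    have h2r : h2.re = 0 := congr_fun hR 1
    have h3r : h3.re = 0 := congr_fun hR 2
    constructor <;>
    · funext i j
      fin_cases i <;> fin_cases j <;>
      · simp [pauliM, Matrix.mul_apply, Matrix.det_fin_two, Fin.sum_univ_two, Matrix.one_apply,
          Complex.ext_iff, Complex.star_def, Complex.add_re, Complex.add_im, Complex.sub_re,
          Complex.sub_im, Complex.mul_re, Complex.mul_im, hb, h1r, h2r, h3r]
        ring_nf
        exact ⟨trivial, trivial⟩
end
end

section
/- If U, V ∈ M₂(ℂ) satisfy U†·U = U·U† = det(U)·I and V†·V = V·V† = det(V)·I, then U·V† + V·U† = U†·V + V†·U, this common matrix equals (det(U+V) − det(U) − det(V))·I, and det(U+V) − det(U) − det(V) = (1/2)·Tr(U)·Tr(V) + 2·(u_I · v_I), where u_I, v_I ∈ ℝ³ are the imaginary parts of the Pauli vectors of U and V. -/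
open Matrix Complex

noncomputable section

lemma key (h0 h1 h2 h3 : ℂ)
    (h : (pauliM h0 h1 h2 h3)ᴴ * pauliM h0 h1 h2 h3
      = (pauliM h0 h1 h2 h3).det • (1 : Matrix (Fin 2) (Fin 2) ℂ)) :
    h0.im = 0 ∧ h1.re = 0 ∧ h2.re = 0 ∧ h3.re = 0 := by
  have e00 := congrFun (congrFun h 0) 0
  have e11 := congrFun (congrFun h 1) 1
  simp [pauliM, Matrix.mul_apply, Fin.sum_univ_succ, Matrix.det_fin_two,
    Matrix.smul_apply, Matrix.one_apply, Matrix.conjTranspose_apply] at e00 e11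
  have r0 := congrArg Complex.re e00
  have r1 := congrArg Complex.re e11
  simp [Complex.add_re, Complex.mul_re, Complex.sub_re, Complex.add_im, Complex.mul_im,
    Complex.sub_im, Complex.I_re, Complex.I_im, Complex.conj_re, Complex.conj_im] at r0 r1
  refine ⟨?_, ?_, ?_, ?_⟩ <;>
    nlinarith [sq_nonneg h0.im, sq_nonneg h1.re, sq_nonneg h2.re, sq_nonneg h3.re, r0, r1]

lemma conjT (h0 h1 h2 h3 : ℂ) (H0 : h0.im = 0) (H1 : h1.re = 0) (H2 : h2.re = 0)
    (H3 : h3.re = 0) :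
    (pauliM h0 h1 h2 h3)ᴴ = pauliM h0 (-h1) (-h2) (-h3) := by
  have c0 : (starRingEnd ℂ) h0 = h0 := by apply Complex.ext <;> simp [H0]
  have c1 : (starRingEnd ℂ) h1 = -h1 := by apply Complex.ext <;> simp [H1]
  have c2 : (starRingEnd ℂ) h2 = -h2 := by apply Complex.ext <;> simp [H2]
  have c3 : (starRingEnd ℂ) h3 = -h3 := by apply Complex.ext <;> simp [H3]
  ext i j
  fin_cases i <;> fin_cases j <;>
    simp [pauliM, Matrix.conjTranspose_apply, map_add, map_sub, _root_.map_mul,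
      c0, c1, c2, c3, Complex.conj_I] <;> ring

lemma pauli_congr {a0 a1 a2 a3 b0 b1 b2 b3 : ℂ} (e0 : a0 = b0) (e1 : a1 = b1)
    (e2 : a2 = b2) (e3 : a3 = b3) : pauliM a0 a1 a2 a3 = pauliM b0 b1 b2 b3 := by
  subst e0 e1 e2 e3; rfl

lemma pauli_mul (a0 a1 a2 a3 b0 b1 b2 b3 : ℂ) :
    pauliM a0 a1 a2 a3 * pauliM b0 b1 b2 b3 =
      pauliM (a0*b0 + a1*b1 + a2*b2 + a3*b3)
        (a0*b1 + b0*a1 + Complex.I*(a2*b3 - a3*b2))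
        (a0*b2 + b0*a2 + Complex.I*(a3*b1 - a1*b3))
        (a0*b3 + b0*a3 + Complex.I*(a1*b2 - a2*b1)) := by
  simp only [pauliM, Matrix.mul_fin_two]
  ext i j
  fin_cases i <;> fin_cases j <;> simp <;> ring_nf <;>
    simp [Complex.I_sq, pow_two] <;> ring

lemma pauli_add (a0 a1 a2 a3 b0 b1 b2 b3 : ℂ) :
    pauliM a0 a1 a2 a3 + pauliM b0 b1 b2 b3 =
      pauliM (a0+b0) (a1+b1) (a2+b2) (a3+b3) := by
  ext i j
  fin_cases i <;> fin_cases j <;> simp [pauliM] <;> ring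

lemma pauli_det (a0 a1 a2 a3 : ℂ) :
    (pauliM a0 a1 a2 a3).det = a0^2 - a1^2 - a2^2 - a3^2 := by
  simp [pauliM, Matrix.det_fin_two_of]; ring_nf; simp [Complex.I_sq, pow_two]; ring

lemma pauli_trace (a0 a1 a2 a3 : ℂ) : (pauliM a0 a1 a2 a3).trace = 2 * a0 := by
  simp [pauliM, Matrix.trace_fin_two_of]; ring

lemma smul_one_eq (c : ℂ) : c • (1 : Matrix (Fin 2) (Fin 2) ℂ) = pauliM c 0 0 0 := by
  ext i j
  fin_cases i <;> fin_cases j <;>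
    simp [pauliM, Matrix.smul_apply, Matrix.one_apply]

/-- for `U, V` with `X†X = XX† = det(X)·I`, one has
`U·V† + V·U† = U†·V + V†·U = (det(U+V) − det U − det V)·I` and
`det(U+V) − det U − det V = (1/2)·Tr(U)·Tr(V) + 2·(u_I · v_I)`. -/
theorem stmt_2 (U V : Matrix (Fin 2) (Fin 2) ℂ)
    (u0 u1 u2 u3 v0 v1 v2 v3 : ℂ)
    (hU : U = pauliM u0 u1 u2 u3) (hV : V = pauliM v0 v1 v2 v3)
    (hUnorm : Uᴴ * U = U.det • (1 : Matrix (Fin 2) (Fin 2) ℂ) ∧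
      U * Uᴴ = U.det • (1 : Matrix (Fin 2) (Fin 2) ℂ))
    (hVnorm : Vᴴ * V = V.det • (1 : Matrix (Fin 2) (Fin 2) ℂ) ∧
      V * Vᴴ = V.det • (1 : Matrix (Fin 2) (Fin 2) ℂ)) :
    U * Vᴴ + V * Uᴴ = Uᴴ * V + Vᴴ * U ∧
    U * Vᴴ + V * Uᴴ = ((U + V).det - U.det - V.det) • (1 : Matrix (Fin 2) (Fin 2) ℂ) ∧
    (U + V).det - U.det - V.det =
      (1 / 2) * U.trace * V.trace + 2 * ((vecI u1 u2 u3 ⬝ᵥ vecI v1 v2 v3 : ℝ) : ℂ) := by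
  subst hU hV
  obtain ⟨hu0, hu1, hu2, hu3⟩ := key u0 u1 u2 u3 hUnorm.1
  obtain ⟨hv0, hv1, hv2, hv3⟩ := key v0 v1 v2 v3 hVnorm.1
  rw [conjT u0 u1 u2 u3 hu0 hu1 hu2 hu3, conjT v0 v1 v2 v3 hv0 hv1 hv2 hv3]
  have hdot : ((vecI u1 u2 u3 ⬝ᵥ vecI v1 v2 v3 : ℝ) : ℂ)
      = -(u1*v1 + u2*v2 + u3*v3) := by
    have huu1 : u1 = (u1.im : ℂ) * Complex.I := by apply Complex.ext <;> simp [hu1]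
    have huu2 : u2 = (u2.im : ℂ) * Complex.I := by apply Complex.ext <;> simp [hu2]
    have huu3 : u3 = (u3.im : ℂ) * Complex.I := by apply Complex.ext <;> simp [hu3]
    have hvv1 : v1 = (v1.im : ℂ) * Complex.I := by apply Complex.ext <;> simp [hv1]
    have hvv2 : v2 = (v2.im : ℂ) * Complex.I := by apply Complex.ext <;> simp [hv2]
    have hvv3 : v3 = (v3.im : ℂ) * Complex.I := by apply Complex.ext <;> simp [hv3]
    rw [huu1, huu2, huu3, hvv1, hvv2, hvv3]
    simp [vecI, dotProduct, Fin.sum_univ_succ]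
    push_cast
    linear_combination (((u1.im : ℂ) * v1.im + (u2.im : ℂ) * v2.im +
      (u3.im : ℂ) * v3.im)) * Complex.I_sq
  refine ⟨?_, ?_, ?_⟩
  · simp only [pauli_mul, pauli_add]
    apply pauli_congr <;> ring
  · simp only [pauli_mul, pauli_add, pauli_det, smul_one_eq]
    apply pauli_congr <;> ring
  · simp only [pauli_add, pauli_det, pauli_trace, hdot]
    ring
end
end

section
/- Let G ∈ M₂(ℂ) be Hermitian with Pauli decomposition G = g⁰·I + g¹σ₁ + g²σ₂ + g³σ₃ (g⁰ ∈ ℝ, g_R = (g¹,g²,g³) ∈ ℝ³), and let H ∈ M₂(ℂ) have Pauli data (h⁰ = h⁰_R + i·h⁰_I, h_R, h_I). Then H†·G = G·H if and only if both g⁰·h_I + h⁰_I·g_R + g_R × h_R = 0 in ℝ³ and g⁰·h⁰_I + h_I · g_R = 0. -/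
open Matrix Complex

noncomputable section

/-- for Hermitian `G = g⁰·I + g_R·σ` and `H` with Pauli data
`(h⁰, h_R, h_I)`, `H†·G = G·H` iff
`g⁰·h_I + h⁰_I·g_R + g_R × h_R = 0` and `g⁰·h⁰_I + h_I·g_R = 0`. -/
theorem stmt_4 (H G : Matrix (Fin 2) (Fin 2) ℂ) (h0 h1 h2 h3 : ℂ)
    (g0 : ℝ) (gR : Fin 3 → ℝ)
    (hH : H = pauliM h0 h1 h2 h3)
    (hG : G = pauliM (g0 : ℂ) ((gR 0 : ℝ) : ℂ) ((gR 1 : ℝ) : ℂ) ((gR 2 : ℝ) : ℂ)) :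
    Hᴴ * G = G * H ↔
      (g0 • vecI h1 h2 h3 + h0.im • gR + crossProduct gR (vecR h1 h2 h3) = 0 ∧
        g0 * h0.im + vecI h1 h2 h3 ⬝ᵥ gR = 0) := by
  subst hH hG
  rw [← Matrix.ext_iff]
  simp only [pauliM, vecR, vecI, crossProduct, Fin.forall_fin_two, Matrix.mul_apply,
    Fin.sum_univ_two, Matrix.conjTranspose_apply, Matrix.cons_val', Matrix.cons_val_zero,
    Matrix.cons_val_one, Matrix.head_cons, Matrix.head_fin_const, Matrix.empty_val',
    Matrix.cons_val_fin_one, Complex.ext_iff, funext_iff, Fin.forall_fin_succ,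
    Pi.add_apply, Pi.smul_apply, Pi.zero_apply, smul_eq_mul, dotProduct, Fin.sum_univ_three]
  simp only [LinearMap.mk₂_apply, Matrix.cons_val_zero, Matrix.cons_val_one, Matrix.head_cons,
    Fin.succ_zero_eq_one, Fin.succ_one_eq_two, Matrix.cons_val_two, Matrix.tail_cons,
    IsEmpty.forall_iff, and_true]
  simp [Complex.add_re, Complex.add_im, Complex.mul_re, Complex.mul_im, Complex.sub_re,
    Complex.sub_im, Complex.conj_re, Complex.conj_im]
  constructor
  · rintro ⟨⟨⟨a,b⟩,c,d⟩,⟨e,f⟩,g,i⟩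
    ring_nf at a b c d e f g i ⊢
    refine ⟨⟨?_,?_,?_⟩,?_⟩ <;> first | trivial | linarith
  · rintro ⟨⟨a,b,c⟩,d⟩
    ring_nf at a b c d ⊢
    refine ⟨⟨⟨?_,?_⟩,?_,?_⟩,⟨?_,?_⟩,?_,?_⟩ <;> first | trivial | linarith
end
end

section
/- For H ∈ M₂(ℂ) the following are equivalent: (i) there exists an invertible Hermitian G ∈ M₂(ℂ) such that H†·G = G·H (H is G-pseudo-Hermitian for some G); (ii) the characteristic polynomial of H has real coefficients, equivalently Tr(H) ∈ ℝ and det(H) ∈ ℝ (H is PT-symmetric). -/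
open Matrix Complex

noncomputable section

/-- `H ∈ M₂(ℂ)` is PT-symmetric: its characteristic polynomial has real coefficients,
equivalently `Tr(H) ∈ ℝ` and `det(H) ∈ ℝ`. -/
def PTSymmetric (H : Matrix (Fin 2) (Fin 2) ℂ) : Prop :=
  H.trace.im = 0 ∧ H.det.im = 0

/-!
(i) ⇒ (ii): `Hᴴ = G H G⁻¹` is similar to `H`, and conjugate transposition conjugates the trace and
the determinant, so both are real.

(ii) ⇒ (i): subtracting the real scalar `tr H / 2` changes neither side, so let `K` be traceless
with `det K` real. By Cayley–Hamilton `K² = -det K • 1` is Hermitian, and then `G = K + Kᴴ`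
satisfies `Kᴴ G = G K`. This traceless Hermitian `G` is invertible unless it vanishes (as
`Gᴴ G = G² = -det G • 1`), i.e. unless `K` is anti-Hermitian; then `Kᴴ G = G K` asks for a
Hermitian `G` anticommuting with `K`, and a suitable off-diagonal one exists.
-/

namespace Matrix

section StarRing

variable {n R : Type*} [Fintype n] [CommRing R] [StarRing R]

theorem conjTranspose_mul_add_conjTranspose {K : Matrix n n R} (hK : (K * K)ᴴ = K * K) :
    Kᴴ * (K + Kᴴ) = (K + Kᴴ) * K := by
  rw [Matrix.mul_add, Matrix.add_mul, ← conjTranspose_mul, hK, add_comm]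

variable [DecidableEq n]

theorem conjTranspose_add_smul_one_mul {G K : Matrix n n R} {c : R} (hc : star c = c)
    (h : Kᴴ * G = G * K) : (K + c • 1)ᴴ * G = G * (K + c • 1) := by
  rw [conjTranspose_add, conjTranspose_smul, conjTranspose_one, hc, Matrix.add_mul,
    Matrix.mul_add, h, Matrix.smul_mul, Matrix.mul_smul, Matrix.one_mul, Matrix.mul_one]

theorem conjTranspose_eq_conj_of_conjTranspose_mul_eq {G H : Matrix n n R} (hG : IsUnit G.det)
    (h : Hᴴ * G = G * H) : Hᴴ = G * H * G⁻¹ := by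
  rw [← h, Matrix.mul_assoc, mul_nonsing_inv _ hG, Matrix.mul_one]

theorem star_trace_eq_of_conjTranspose_mul_eq {G H : Matrix n n R} (hG : IsUnit G.det)
    (h : Hᴴ * G = G * H) : star H.trace = H.trace := by
  rw [← trace_conjTranspose, conjTranspose_eq_conj_of_conjTranspose_mul_eq hG h,
    trace_conj ((isUnit_iff_isUnit_det G).mpr hG)]

theorem star_det_eq_of_conjTranspose_mul_eq {G H : Matrix n n R} (hG : IsUnit G.det)
    (h : Hᴴ * G = G * H) : star H.det = H.det := by
  rw [← det_conjTranspose, conjTranspose_eq_conj_of_conjTranspose_mul_eq hG h,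
    det_conj ((isUnit_iff_isUnit_det G).mpr hG)]

end StarRing

section FinTwo

variable {R : Type*} [CommRing R]

theorem mul_self_eq_neg_det_smul_one_of_trace_eq_zero {K : Matrix (Fin 2) (Fin 2) R}
    (hK : K.trace = 0) : K * K = -K.det • 1 := by
  have hadj : adjugate K = -K := by
    rw [trace_fin_two] at hK
    rw [adjugate_fin_two, eta_fin_two (-K)]
    ext i j
    fin_cases i <;> fin_cases j <;>
      simp only [Fin.isValue, Fin.zero_eta, Fin.mk_one, of_apply, cons_val', cons_val_zero,
        cons_val_one, cons_val_fin_one, neg_apply] <;>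
      linear_combination hK
  rw [neg_smul, ← mul_adjugate, hadj, Matrix.mul_neg, neg_neg]

theorem eq_zero_of_isHermitian_of_trace_eq_zero_of_det_eq_zero [PartialOrder R] [StarRing R]
    [StarOrderedRing R] [NoZeroDivisors R]
    {A : Matrix (Fin 2) (Fin 2) R} (hA : A.IsHermitian) (htr : A.trace = 0) (hdet : A.det = 0) :
    A = 0 := by
  rw [← conjTranspose_mul_self_eq_zero, hA.eq, mul_self_eq_neg_det_smul_one_of_trace_eq_zero htr,
    hdet, neg_zero, zero_smul]

theorem mul_add_mul_eq_zero_of_trace_eq_zero [StarRing R] {K : Matrix (Fin 2) (Fin 2) R}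
    (hK : K.trace = 0) {w : R} (hw : w * K 1 0 + star w * K 0 1 = 0) :
    !![0, w; star w, 0] * K + K * !![0, w; star w, 0] = 0 := by
  rw [trace_fin_two] at hK
  ext i j
  fin_cases i <;> fin_cases j <;>
    simp only [Fin.zero_eta, Fin.mk_one, Fin.isValue, Matrix.add_apply, mul_apply,
      Fin.sum_univ_two, of_apply, cons_val', cons_val_fin_one, cons_val_zero, cons_val_one,
      zero_mul, mul_zero, zero_add, add_zero, Matrix.zero_apply]
  · linear_combination hw
  · linear_combination w * hK
  · linear_combination star w * hK
  · linear_combination hw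

theorem det_sub_smul_one_fin_two (H : Matrix (Fin 2) (Fin 2) R) (c : R) :
    (H - c • 1).det = H.det - c * H.trace + c ^ 2 := by
  simp only [det_fin_two, trace_fin_two, Matrix.sub_apply, Matrix.smul_apply, smul_eq_mul,
    one_apply_eq, one_apply_ne zero_ne_one, one_apply_ne one_ne_zero]
  ring

variable {𝕜 : Type*} [Field 𝕜] [StarRing 𝕜]

theorem exists_isHermitian_anticommute_of_trace_eq_zero {K : Matrix (Fin 2) (Fin 2) 𝕜}
    (htr : K.trace = 0) (hK : Kᴴ = -K) :
    ∃ G : Matrix (Fin 2) (Fin 2) 𝕜, G.IsHermitian ∧ IsUnit G.det ∧ G * K + K * G = 0 := by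
  have hK10 : K 1 0 = -star (K 0 1) := by
    rw [← star_neg, ← neg_apply, ← hK, conjTranspose_apply, star_star]
  obtain ⟨w, hw0, hw⟩ : ∃ w : 𝕜, w ≠ 0 ∧ w * K 1 0 + star w * K 0 1 = 0 := by
    by_cases hb : K 0 1 = 0
    · exact ⟨1, one_ne_zero, by simp [hK10, hb]⟩
    · exact ⟨K 0 1, hb, by rw [hK10]; ring⟩
  refine ⟨!![0, w; star w, 0], ?_, ?_, mul_add_mul_eq_zero_of_trace_eq_zero htr hw⟩
  · ext i j; fin_cases i <;> fin_cases j <;> simp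
  · rw [det_fin_two_of, isUnit_iff_ne_zero]
    simpa using hw0

theorem exists_isHermitian_conjTranspose_mul_eq_of_trace_eq_zero [PartialOrder 𝕜]
    [StarOrderedRing 𝕜] {K : Matrix (Fin 2) (Fin 2) 𝕜} (htr : K.trace = 0)
    (hdet : star K.det = K.det) :
    ∃ G : Matrix (Fin 2) (Fin 2) 𝕜, G.IsHermitian ∧ IsUnit G.det ∧ Kᴴ * G = G * K := by
  by_cases hA : K + Kᴴ = 0
  · obtain ⟨G, hG, hGdet, hGK⟩ :=
      exists_isHermitian_anticommute_of_trace_eq_zero htr (eq_neg_of_add_eq_zero_right hA)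
    refine ⟨G, hG, hGdet, ?_⟩
    rw [eq_neg_of_add_eq_zero_right hA, Matrix.neg_mul, eq_neg_of_add_eq_zero_left hGK]
  · refine ⟨K + Kᴴ, isHermitian_add_transpose_self K,
      isUnit_iff_ne_zero.mpr fun h => hA ?_, ?_⟩
    · refine eq_zero_of_isHermitian_of_trace_eq_zero_of_det_eq_zero
        (isHermitian_add_transpose_self K) ?_ h
      rw [trace_add, trace_conjTranspose, htr, star_zero, add_zero]
    · refine conjTranspose_mul_add_conjTranspose ?_
      rw [mul_self_eq_neg_det_smul_one_of_trace_eq_zero htr, conjTranspose_smul, conjTranspose_one,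
        star_neg, hdet]

end FinTwo

end Matrix

/-- `H` is `G`-pseudo-Hermitian for some invertible Hermitian `G`
iff `H` is PT-symmetric. -/
theorem stmt_6 (H : Matrix (Fin 2) (Fin 2) ℂ) :
    (∃ G : Matrix (Fin 2) (Fin 2) ℂ, G.IsHermitian ∧ IsUnit G.det ∧ Hᴴ * G = G * H) ↔
    PTSymmetric H := by
  constructor
  · rintro ⟨G, -, hG, hHG⟩
    exact ⟨conj_eq_iff_im.mp (star_trace_eq_of_conjTranspose_mul_eq hG hHG),
      conj_eq_iff_im.mp (star_det_eq_of_conjTranspose_mul_eq hG hHG)⟩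
  · rintro ⟨htr, hdet⟩
    set c := H.trace / 2
    have hc : star c = c := by simp [c, conj_eq_iff_im.mpr htr]
    open scoped ComplexOrder in
    obtain ⟨G, hG, hGdet, hGK⟩ := exists_isHermitian_conjTranspose_mul_eq_of_trace_eq_zero
      (K := H - c • 1) (by simp [trace_sub, c])
      (by simp [det_sub_smul_one_fin_two, hc, conj_eq_iff_im.mpr htr, conj_eq_iff_im.mpr hdet])
    refine ⟨G, hG, hGdet, ?_⟩
    simpa using conjTranspose_add_smul_one_mul hc hGK
end
end

section
/- Let H ∈ M₂(ℂ) have Pauli data with h⁰_I = 0, h_R = 0 and h_I ≠ 0 (so H lies in the class S₂ of PT-symmetric normal matrices with complex-conjugate eigenvalues). If G ∈ M₂(ℂ) is Hermitian and invertible with H†·G = G·H, then Tr(G) = 0. -/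
open Matrix Complex

noncomputable section

/-- if `H ∈ S₂` (`h⁰_I = 0`, `h_R = 0`, `h_I ≠ 0`) and `G` is Hermitian
invertible with `H†·G = G·H`, then `Tr(G) = 0`. -/
theorem stmt_7 (H G : Matrix (Fin 2) (Fin 2) ℂ) (h0 h1 h2 h3 : ℂ)
    (hH : H = pauliM h0 h1 h2 h3)
    (h0I : h0.im = 0) (hR : vecR h1 h2 h3 = 0) (hI : vecI h1 h2 h3 ≠ 0)
    (hGherm : G.IsHermitian) (hGinv : IsUnit G.det)
    (hHG : Hᴴ * G = G * H) :
    G.trace = 0 := by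
  subst hH
  have hr1 : h1.re = 0 := by have := congrFun hR 0; simpa [vecR] using this
  have hr2 : h2.re = 0 := by have := congrFun hR 1; simpa [vecR] using this
  have hr3 : h3.re = 0 := by have := congrFun hR 2; simpa [vecR] using this
  have hc0 : (starRingEnd ℂ) h0 = h0 := Complex.conj_eq_iff_im.2 h0I
  have hc1 : (starRingEnd ℂ) h1 = -h1 := by
    rw [Complex.conj_eq_iff_re] at *; exact Complex.ext (by simp [hr1]) (by simp)
  have hc2 : (starRingEnd ℂ) h2 = -h2 := Complex.ext (by simp [hr2]) (by simp)
  have hc3 : (starRingEnd ℂ) h3 = -h3 := Complex.ext (by simp [hr3]) (by simp)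
  have e00 := congrFun (congrFun hHG 0) 0
  have e11 := congrFun (congrFun hHG 1) 1
  have e01 := congrFun (congrFun hHG 0) 1
  simp [pauliM, Matrix.mul_apply, Fin.sum_univ_two, Matrix.conjTranspose_apply,
    hc0, hc1, hc2, hc3, Complex.conj_I] at e00 e11 e01
  rw [Matrix.trace_fin_two]
  have key1 : (h1 - Complex.I * h2) * (G 0 0 + G 1 1) = 0 := by linear_combination -e01
  have key2 : h3 * (G 0 0 + G 1 1) = 0 := by linear_combination (e11 - e00) / 2
  rcases mul_eq_zero.1 key1 with h | h
  · rcases mul_eq_zero.1 key2 with h3z | h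
    · exfalso
      apply hI
      have him2 : h2.im = 0 := by
        have := congrArg Complex.re h
        simpa [hr1] using this
      have him1 : h1.im = 0 := by
        have := congrArg Complex.im h
        simpa [hr2] using this
      have him3 : h3.im = 0 := by simpa using congrArg Complex.im h3z
      funext i
      fin_cases i <;> simp [vecI, him1, him2, him3]
    · exact h
  · exact h
end
end

section
/- Let H ∈ M₂(ℂ) have Pauli data with h⁰_I = 0, h_R ≠ 0, h_I ≠ 0 and h_R·h_I = 0 (the class S₄ of non-normal PT-symmetric matrices), and let G ∈ M₂(ℂ) be Hermitian and invertible with H†·G = G·H and Pauli data (g⁰, g_R). Then h_R × g_R = 0 if and only if Tr(G) = 0. -/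
open Matrix Complex

noncomputable section

/-- Euclidean norm of a vector in ℝ³. -/
def norm3 (u : Fin 3 → ℝ) : ℝ := Real.sqrt (u ⬝ᵥ u)

/-- for `H ∈ S₄` and invertible Hermitian `G = g⁰·I + g_R·σ` with
`H†·G = G·H`, one has `h_R × g_R = 0 ↔ Tr(G) = 0`. -/
theorem stmt_8 (H G : Matrix (Fin 2) (Fin 2) ℂ) (h0 h1 h2 h3 : ℂ)
    (g0 : ℝ) (gR : Fin 3 → ℝ)
    (hH : H = pauliM h0 h1 h2 h3)
    (h0I : h0.im = 0) (hR : vecR h1 h2 h3 ≠ 0) (hI : vecI h1 h2 h3 ≠ 0)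
    (hRI : vecR h1 h2 h3 ⬝ᵥ vecI h1 h2 h3 = 0)
    (hG : G = pauliM (g0 : ℂ) ((gR 0 : ℝ) : ℂ) ((gR 1 : ℝ) : ℂ) ((gR 2 : ℝ) : ℂ))
    (hGinv : IsUnit G.det)
    (hHG : Hᴴ * G = G * H) :
    crossProduct (vecR h1 h2 h3) gR = 0 ↔ G.trace = 0 := by

  subst hH hG
  have e := Matrix.ext_iff.mpr hHG
  have e00 := e 0 0
  have e01 := e 0 1
  have e10 := e 1 0
  have e11 := e 1 1
  simp [pauliM, Matrix.mul_apply, Matrix.conjTranspose_apply, Fin.sum_univ_two,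
    Complex.ext_iff, h0I] at e00 e01 e10 e11
  obtain ⟨a00, b00⟩ := e00
  obtain ⟨a01, b01⟩ := e01
  obtain ⟨a10, b10⟩ := e10
  obtain ⟨a11, b11⟩ := e11
  -- the three real equations: h_R × g_R = g0 • h_I
  have E1 : h2.re * gR 2 - h3.re * gR 1 = g0 * h1.im := by linarith
  have E2 : h3.re * gR 0 - h1.re * gR 2 = g0 * h2.im := by linarith
  have E3 : h1.re * gR 1 - h2.re * gR 0 = g0 * h3.im := by linarith
  have hT : (pauliM (g0 : ℂ) ((gR 0 : ℝ) : ℂ) ((gR 1 : ℝ) : ℂ) ((gR 2 : ℝ) : ℂ)).trace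
      = 2 * (g0 : ℂ) := by
    simp [pauliM, Matrix.trace, Fin.sum_univ_two]
    ring
  have hTiff : (pauliM (g0 : ℂ) ((gR 0 : ℝ) : ℂ) ((gR 1 : ℝ) : ℂ) ((gR 2 : ℝ) : ℂ)).trace = 0
      ↔ g0 = 0 := by
    rw [hT]
    constructor
    · intro h
      have : (2 * (g0 : ℂ)).re = 0 := by rw [h]; simp
      simpa using this
    · intro h; rw [h]; simp
  rw [hTiff]
  constructor
  · intro hc
    have hc0 : (crossProduct (vecR h1 h2 h3) gR) 0 = 0 := by rw [hc]; rfl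
    have hc1 : (crossProduct (vecR h1 h2 h3) gR) 1 = 0 := by rw [hc]; rfl
    have hc2 : (crossProduct (vecR h1 h2 h3) gR) 2 = 0 := by rw [hc]; rfl
    simp [crossProduct, vecR] at hc0 hc1 hc2
    by_contra hg0
    have i1 : h1.im = 0 := by
      have h : g0 * h1.im = 0 := by linarith
      rcases mul_eq_zero.mp h with h | h
      · exact absurd h hg0
      · exact h
    have i2 : h2.im = 0 := by
      have h : g0 * h2.im = 0 := by linarith
      rcases mul_eq_zero.mp h with h | h
      · exact absurd h hg0
      · exact h
    have i3 : h3.im = 0 := by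
      have h : g0 * h3.im = 0 := by linarith
      rcases mul_eq_zero.mp h with h | h
      · exact absurd h hg0
      · exact h
    apply hI
    funext i
    fin_cases i <;> simp [vecI, i1, i2, i3]
  · intro hg0
    rw [hg0] at E1 E2 E3
    simp at E1 E2 E3
    funext i
    fin_cases i <;> simp [crossProduct, vecR] <;> linarith
end
end

section
/- Let H ∈ M₂(ℂ) have Pauli data with h⁰_I = 0, h_R ≠ 0, h_I ≠ 0 and h_R·h_I = 0 (class S₄), and let G ∈ M₂(ℂ) be Hermitian and invertible with Pauli data (g⁰, g_R) such that H†·G = G·H and h_R · g_R = 0. Then Tr(G) ≠ 0, |h_R|·|g_R| = |h_I|·|g⁰|, and |h_R| ≠ |h_I| (so H is diagonalizable with two distinct real eigenvalues). -/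
open Matrix Complex

noncomputable section

set_option maxHeartbeats 1600000

/-- for `H ∈ S₄` and invertible Hermitian `G = g⁰·I + g_R·σ` with
`H†·G = G·H` and `h_R · g_R = 0`, one has `Tr(G) ≠ 0`, `|h_R|·|g_R| = |h_I|·|g⁰|`,
and `|h_R| ≠ |h_I|`. -/
theorem stmt_9 (H G : Matrix (Fin 2) (Fin 2) ℂ) (h0 h1 h2 h3 : ℂ)
    (g0 : ℝ) (gR : Fin 3 → ℝ)
    (hH : H = pauliM h0 h1 h2 h3)
    (h0I : h0.im = 0) (hR : vecR h1 h2 h3 ≠ 0) (hI : vecI h1 h2 h3 ≠ 0)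
    (hRI : vecR h1 h2 h3 ⬝ᵥ vecI h1 h2 h3 = 0)
    (hG : G = pauliM (g0 : ℂ) ((gR 0 : ℝ) : ℂ) ((gR 1 : ℝ) : ℂ) ((gR 2 : ℝ) : ℂ))
    (hGinv : IsUnit G.det)
    (hHG : Hᴴ * G = G * H)
    (hperp : vecR h1 h2 h3 ⬝ᵥ gR = 0) :
    G.trace ≠ 0 ∧
    norm3 (vecR h1 h2 h3) * norm3 gR = norm3 (vecI h1 h2 h3) * |g0| ∧
    norm3 (vecR h1 h2 h3) ≠ norm3 (vecI h1 h2 h3) := by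
  subst hH hG
  obtain ⟨a1, a2, a3, b1, b2, b3, g1, g2, g3, ha1, ha2, ha3, hb1, hb2, hb3, hg1, hg2, hg3⟩ :
      ∃ a1 a2 a3 b1 b2 b3 g1 g2 g3 : ℝ, h1.re = a1 ∧ h2.re = a2 ∧ h3.re = a3 ∧
        h1.im = b1 ∧ h2.im = b2 ∧ h3.im = b3 ∧ gR 0 = g1 ∧ gR 1 = g2 ∧ gR 2 = g3 :=
    ⟨_, _, _, _, _, _, _, _, _, rfl, rfl, rfl, rfl, rfl, rfl, rfl, rfl, rfl⟩
  rw [← Matrix.ext_iff] at hHG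
  simp only [pauliM, Matrix.mul_apply, Fin.sum_univ_two, conjTranspose_apply,
    Fin.forall_fin_two, Matrix.cons_val', Matrix.cons_val_zero, Matrix.cons_val_one,
    Matrix.head_cons, Matrix.head_fin_const, Matrix.empty_val', Matrix.cons_val_fin_one,
    Complex.ext_iff, Matrix.of_apply] at hHG
  simp only [Complex.add_re, Complex.add_im, Complex.sub_re, Complex.sub_im,
    Complex.mul_re, Complex.mul_im, Complex.star_def, Complex.conj_re, Complex.conj_im,
    Complex.ofReal_re, Complex.ofReal_im, Complex.I_re, Complex.I_im, h0I,
    ha1, ha2, ha3, hb1, hb2, hb3, hg1, hg2, hg3] at hHG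
  obtain ⟨⟨⟨e1, e2⟩, e3, e4⟩, ⟨e5, e6⟩, e7, e8⟩ := hHG
  have B1 : g0 * b1 = a2 * g3 - a3 * g2 := by linarith
  have B2 : g0 * b2 = a3 * g1 - a1 * g3 := by linarith
  have B3 : g0 * b3 = a1 * g2 - a2 * g1 := by linarith
  clear e1 e2 e3 e4 e5 e6 e7 e8
  simp only [vecR, vecI, dotProduct, Fin.sum_univ_three, Matrix.cons_val_zero,
    Matrix.cons_val_one, Matrix.head_cons, Matrix.cons_val_two, Matrix.tail_cons,
    ha1, ha2, ha3, hb1, hb2, hb3, hg1, hg2, hg3] at hperp hRI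
  have hane : a1 ^ 2 + a2 ^ 2 + a3 ^ 2 > 0 := by
    rcases Function.ne_iff.mp hR with ⟨i, hi⟩
    fin_cases i <;> simp [vecR, ha1, ha2, ha3] at hi <;> positivity
  have hbne : b1 ^ 2 + b2 ^ 2 + b3 ^ 2 > 0 := by
    rcases Function.ne_iff.mp hI with ⟨i, hi⟩
    fin_cases i <;> simp [vecI, hb1, hb2, hb3] at hi <;> positivity
  have hdet : g0 ^ 2 - g1 ^ 2 - g2 ^ 2 - g3 ^ 2 ≠ 0 := by
    have h := hGinv.ne_zero
    rw [pauliM, Matrix.det_fin_two_of] at h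
    intro hc
    apply h
    have hc2 : ((g0 ^ 2 - g1 ^ 2 - g2 ^ 2 - g3 ^ 2 : ℝ) : ℂ) = 0 := by rw [hc]; simp
    rw [hg1, hg2, hg3]
    push_cast at hc2 ⊢
    linear_combination hc2 + (g2 : ℂ) ^ 2 * Complex.I_sq
  have lag : (a1 ^ 2 + a2 ^ 2 + a3 ^ 2) * (g1 ^ 2 + g2 ^ 2 + g3 ^ 2)
      = g0 ^ 2 * (b1 ^ 2 + b2 ^ 2 + b3 ^ 2) := by
    linear_combination (-(g0 * b1) - (a2 * g3 - a3 * g2)) * B1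
      - (g0 * b2 + (a3 * g1 - a1 * g3)) * B2
      - (g0 * b3 + (a1 * g2 - a2 * g1)) * B3
      + (a1 * g1 + a2 * g2 + a3 * g3) * hperp
  have hg0 : g0 ≠ 0 := by
    intro hc
    rw [hc] at lag
    have h1 : g1 ^ 2 + g2 ^ 2 + g3 ^ 2 = 0 := by nlinarith
    apply hdet; rw [hc]; linarith
  refine ⟨?_, ?_, ?_⟩
  · rw [pauliM, Matrix.trace_fin_two_of]
    have : ((g0 : ℂ) + (gR 2 : ℝ)) + ((g0 : ℂ) - (gR 2 : ℝ)) = ((2 * g0 : ℝ) : ℂ) := by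
      push_cast; ring
    rw [this]
    simpa using hg0
  · simp only [norm3, vecR, vecI, dotProduct, Fin.sum_univ_three, Matrix.cons_val_zero,
      Matrix.cons_val_one, Matrix.head_cons, Matrix.cons_val_two, Matrix.tail_cons,
      ha1, ha2, ha3, hb1, hb2, hb3, hg1, hg2, hg3]
    have hA : (0:ℝ) ≤ a1 * a1 + a2 * a2 + a3 * a3 := by
      nlinarith [mul_self_nonneg a1, mul_self_nonneg a2, mul_self_nonneg a3]
    have hB : (0:ℝ) ≤ b1 * b1 + b2 * b2 + b3 * b3 := by
      nlinarith [mul_self_nonneg b1, mul_self_nonneg b2, mul_self_nonneg b3]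
    calc Real.sqrt (a1 * a1 + a2 * a2 + a3 * a3) * Real.sqrt (g1 * g1 + g2 * g2 + g3 * g3)
        = Real.sqrt ((a1 * a1 + a2 * a2 + a3 * a3) * (g1 * g1 + g2 * g2 + g3 * g3)) :=
          (Real.sqrt_mul hA _).symm
      _ = Real.sqrt ((b1 * b1 + b2 * b2 + b3 * b3) * g0 ^ 2) := by
          rw [show (a1 * a1 + a2 * a2 + a3 * a3) * (g1 * g1 + g2 * g2 + g3 * g3)
            = (b1 * b1 + b2 * b2 + b3 * b3) * g0 ^ 2 from by linear_combination lag]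
      _ = Real.sqrt (b1 * b1 + b2 * b2 + b3 * b3) * Real.sqrt (g0 ^ 2) := Real.sqrt_mul hB _
      _ = Real.sqrt (b1 * b1 + b2 * b2 + b3 * b3) * |g0| := by rw [Real.sqrt_sq_eq_abs]
  · simp only [norm3, vecR, vecI, dotProduct, Fin.sum_univ_three, Matrix.cons_val_zero,
      Matrix.cons_val_one, Matrix.head_cons, Matrix.cons_val_two, Matrix.tail_cons,
      ha1, ha2, ha3, hb1, hb2, hb3, hg1, hg2, hg3]
    intro hc
    have heq : a1 * a1 + a2 * a2 + a3 * a3 = b1 * b1 + b2 * b2 + b3 * b3 := by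
      have hA : (0:ℝ) ≤ a1 * a1 + a2 * a2 + a3 * a3 := by
        nlinarith [mul_self_nonneg a1, mul_self_nonneg a2, mul_self_nonneg a3]
      have hB : (0:ℝ) ≤ b1 * b1 + b2 * b2 + b3 * b3 := by
        nlinarith [mul_self_nonneg b1, mul_self_nonneg b2, mul_self_nonneg b3]
      rw [← Real.sq_sqrt hA, hc, Real.sq_sqrt hB]
    apply hdet
    have hgg : g1 ^ 2 + g2 ^ 2 + g3 ^ 2 = g0 ^ 2 := by nlinarith [lag, heq]
    linarith
end
end

section
/- Let H ∈ M₂(ℂ) have Pauli data with h⁰_I = 0, h_R ≠ 0, h_I ≠ 0 and h_R·h_I = 0 (class S₄), and let G ∈ M₂(ℂ) be Hermitian and invertible with Pauli data (g⁰, g_R) such that g⁰ ≠ 0, h_R · g_R ≠ 0 and H†·G = G·H. Then |h_R| = |h_I| (equivalently, H is non-diagonalizable) if and only if |h_R × g_R| = |h_R|·|g⁰|, i.e. the angle θ between h_R and g_R satisfies |sin θ| = |g⁰|/|g_R|. -/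
open Matrix Complex

noncomputable section

/-- for `H ∈ S₄` and invertible Hermitian `G = g⁰·I + g_R·σ` with
`g⁰ ≠ 0`, `h_R · g_R ≠ 0` and `H†·G = G·H`, `H` is non-diagonalizable
(`|h_R| = |h_I|`) iff `|h_R × g_R| = |h_R|·|g⁰|`
(i.e. the angle `θ` between `h_R` and `g_R` has `|sin θ| = |g⁰|/|g_R|`). -/
theorem stmt_10 (H G : Matrix (Fin 2) (Fin 2) ℂ) (h0 h1 h2 h3 : ℂ)
    (g0 : ℝ) (gR : Fin 3 → ℝ)
    (hH : H = pauliM h0 h1 h2 h3)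
    (h0I : h0.im = 0) (hR : vecR h1 h2 h3 ≠ 0) (hI : vecI h1 h2 h3 ≠ 0)
    (hRI : vecR h1 h2 h3 ⬝ᵥ vecI h1 h2 h3 = 0)
    (hG : G = pauliM (g0 : ℂ) ((gR 0 : ℝ) : ℂ) ((gR 1 : ℝ) : ℂ) ((gR 2 : ℝ) : ℂ))
    (hGinv : IsUnit G.det)
    (hg0 : g0 ≠ 0)
    (hnperp : vecR h1 h2 h3 ⬝ᵥ gR ≠ 0)
    (hHG : Hᴴ * G = G * H) :
    norm3 (vecR h1 h2 h3) = norm3 (vecI h1 h2 h3) ↔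
      norm3 (crossProduct (vecR h1 h2 h3) gR) = norm3 (vecR h1 h2 h3) * |g0| := by
  subst hH hG
  have e00 := congrFun (congrFun hHG 0) 0
  have e01 := congrFun (congrFun hHG 0) 1
  have e11 := congrFun (congrFun hHG 1) 1
  simp only [pauliM, Matrix.mul_apply, Fin.sum_univ_two, Matrix.conjTranspose_apply,
    Matrix.cons_val', Matrix.cons_val_zero, Matrix.cons_val_one, Matrix.head_cons,
    Matrix.empty_val', Matrix.cons_val_fin_one, Matrix.head_fin_const, Matrix.of_apply] at e00 e01 e11
  rw [Complex.ext_iff] at e00 e01 e11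
  obtain ⟨e00r, e00i⟩ := e00
  obtain ⟨e01r, e01i⟩ := e01
  obtain ⟨e11r, e11i⟩ := e11
  simp only [Complex.add_re, Complex.add_im, Complex.sub_re, Complex.sub_im, Complex.mul_re,
    Complex.mul_im, Complex.conj_re, Complex.conj_im, Complex.I_re, Complex.I_im,
    Complex.ofReal_re, Complex.ofReal_im, Complex.star_def, map_add, map_sub,
    _root_.map_mul, Complex.conj_I, Complex.neg_re, Complex.neg_im, h0I]
      at e00r e00i e01r e01i e11r e11i
  have E1 : h2.re * gR 2 - h3.re * gR 1 = g0 * h1.im := by linear_combination e01i / 2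
  have E2 : h3.re * gR 0 - h1.re * gR 2 = g0 * h2.im := by linear_combination e01r / 2
  have E3 : h1.re * gR 1 - h2.re * gR 0 = g0 * h3.im := by
    linear_combination e00i / 4 - e11i / 4
  have hc : norm3 (crossProduct (vecR h1 h2 h3) gR) = |g0| * norm3 (vecI h1 h2 h3) := by
    have hdot : crossProduct (vecR h1 h2 h3) gR ⬝ᵥ crossProduct (vecR h1 h2 h3) gR
        = g0 ^ 2 * (vecI h1 h2 h3 ⬝ᵥ vecI h1 h2 h3) := by
      simp only [cross_apply, vecR, vecI, dotProduct, Fin.sum_univ_three,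
        Matrix.cons_val_zero, Matrix.cons_val_one, Matrix.head_cons,
        Matrix.cons_val_two, Matrix.tail_cons]
      linear_combination (h2.re * gR 2 - h3.re * gR 1 + g0 * h1.im) * E1
        + (h3.re * gR 0 - h1.re * gR 2 + g0 * h2.im) * E2
        + (h1.re * gR 1 - h2.re * gR 0 + g0 * h3.im) * E3
    rw [norm3, norm3, hdot, Real.sqrt_mul (sq_nonneg g0), Real.sqrt_sq_eq_abs]
  rw [hc]
  constructor
  · intro h; rw [h]; ring
  · intro h
    have hg : |g0| ≠ 0 := abs_ne_zero.mpr hg0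
    have : |g0| * norm3 (vecI h1 h2 h3) = |g0| * norm3 (vecR h1 h2 h3) := by
      linear_combination h
    exact (mul_left_cancel₀ hg this).symm
end
end

section
/- Let G ∈ M₂(ℂ) be Hermitian with det(G) > 0 (det(G) is real since G is Hermitian; in particular G is invertible), and let H ∈ M₂(ℂ) satisfy H†·G = G·H. Then every eigenvalue of H is real; equivalently Tr(H) ∈ ℝ, det(H) ∈ ℝ, and (Tr(H))² − 4·det(H) ≥ 0. -/
open Matrix Complex

noncomputable section

-- key real inequality
lemma key_ineq0 (a d p q x B C : ℝ) (hBn : 0 ≤ B) (hCn : 0 ≤ C)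
    (hcs : x^2 ≤ B*C) (hg : 0 < a*d - B) :
    0 ≤ (d*p + a*q - 2*x)^2 - 4*(a*d - B)*(p*q - C) := by
  have ha : a ≠ 0 := by intro h; rw [h] at hg; simp at hg; linarith
  have ha2 : 0 < a^2 := by positivity
  have hQ : 0 ≤ B*p^2 - 2*a*p*x + a^2*C := by
    rcases eq_or_lt_of_le hCn with h0 | h0
    · have hx0 : x = 0 := by nlinarith
      rw [hx0, ← h0]
      nlinarith [mul_nonneg hBn (sq_nonneg p)]
    · nlinarith [sq_nonneg (x*p - a*C)]
  nlinarith [sq_nonneg (2*(a*d-B)*p - a*(d*p + a*q - 2*x)),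
    mul_nonneg (le_of_lt hg) hQ]

lemma key_ineq (a d p q r s u v : ℝ) (hg : 0 < a*d - (r^2+s^2)) :
    0 ≤ (d*p + a*q - 2*(r*u+s*v))^2 - 4*(a*d - (r^2+s^2))*(p*q - (u^2+v^2)) := by
  apply key_ineq0 a d p q (r*u+s*v) (r^2+s^2) (u^2+v^2) (by positivity) (by positivity) ?_ hg
  nlinarith [sq_nonneg (r*v - s*u)]

set_option maxHeartbeats 1000000 in
/-- if `G` is Hermitian with `det(G) > 0` and `H†·G = G·H`, then every
eigenvalue of `H` is real; equivalently `Tr(H) ∈ ℝ`, `det(H) ∈ ℝ` and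
`(Tr H)² − 4·det(H) ≥ 0`. -/
theorem stmt_11 (H G : Matrix (Fin 2) (Fin 2) ℂ)
    (hGherm : G.IsHermitian) (hGdet : 0 < G.det.re)
    (hHG : Hᴴ * G = G * H) :
    (∀ μ ∈ spectrum ℂ H, μ.im = 0) ∧
    H.trace.im = 0 ∧ H.det.im = 0 ∧ 0 ≤ H.trace.re ^ 2 - 4 * H.det.re := by
  set K := G * H with hKdef
  have hK : K.IsHermitian := by
    rw [Matrix.IsHermitian, hKdef, conjTranspose_mul, hGherm.eq, hHG]
  -- entries
  have hg10 : G 1 0 = starRingEnd ℂ (G 0 1) := (hGherm.apply 1 0).symm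
  have hg00 : (G 0 0).im = 0 := by
    have := hGherm.apply 0 0; have h2 := congrArg Complex.im this
    simp [Complex.ext_iff] at h2
    linarith
  have hg11 : (G 1 1).im = 0 := by
    have := hGherm.apply 1 1; have h2 := congrArg Complex.im this
    simp [Complex.ext_iff] at h2
    linarith
  have hk10 : K 1 0 = starRingEnd ℂ (K 0 1) := (hK.apply 1 0).symm
  have hk00 : (K 0 0).im = 0 := by
    have := hK.apply 0 0; have h2 := congrArg Complex.im this
    simp [Complex.ext_iff] at h2
    linarith
  have hk11 : (K 1 1).im = 0 := by
    have := hK.apply 1 1; have h2 := congrArg Complex.im this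
    simp [Complex.ext_iff] at h2
    linarith
  -- det relation
  have hdetK : K.det = G.det * H.det := by rw [hKdef, det_mul]
  -- trace relation
  have hadj : adjugate G * K = G.det • H := by
    rw [hKdef, ← mul_assoc, adjugate_mul, smul_mul, one_mul]
  have htr : G 1 1 * K 0 0 - G 0 1 * K 1 0 - G 1 0 * K 0 1 + G 0 0 * K 1 1
      = G.det * H.trace := by
    have := congrArg Matrix.trace hadj
    rw [trace_smul, smul_eq_mul] at this
    rw [← this]
    simp [Matrix.trace_fin_two, Matrix.mul_apply, Fin.sum_univ_two, adjugate_fin_two,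
      Matrix.vecMul, dotProduct, Matrix.cons_val_zero, Matrix.cons_val_one,
      Matrix.head_cons]
    ring
  have hdetG : G.det = G 0 0 * G 1 1 - G 0 1 * G 1 0 := det_fin_two G
  have hdetK2 : K.det = K 0 0 * K 1 1 - K 0 1 * K 1 0 := det_fin_two K
  -- real variables
  set a := (G 0 0).re; set d := (G 1 1).re
  set r := (G 0 1).re; set s := (G 0 1).im
  set p := (K 0 0).re; set q := (K 1 1).re
  set u := (K 0 1).re; set v := (K 0 1).im
  have hGdetre : G.det.re = a*d - (r^2+s^2) := by
    rw [hdetG, hg10]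
    simp [Complex.ext_iff, Complex.mul_re, Complex.mul_im, hg00, hg11]
    ring
  have hGdetim : G.det.im = 0 := by
    rw [hdetG, hg10]
    simp [Complex.mul_im, hg00, hg11]
    ring
  have hKdetre : K.det.re = p*q - (u^2+v^2) := by
    rw [hdetK2, hk10]
    simp [Complex.mul_re, hk00, hk11]
    ring
  have hKdetim : K.det.im = 0 := by
    rw [hdetK2, hk10]
    simp [Complex.mul_im, hk00, hk11]
    ring
  have hGd : 0 < a*d - (r^2+s^2) := by rw [← hGdetre]; exact hGdet
  -- trace of adj*K real parts
  have htre : (G.det * H.trace).re = d*p + a*q - 2*(r*u+s*v) := by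
    rw [← htr, hg10, hk10]
    simp [Complex.mul_re, Complex.mul_im, hg00, hg11, hk00, hk11]
    ring
  have htim : (G.det * H.trace).im = 0 := by
    rw [← htr, hg10, hk10]
    simp [Complex.mul_re, Complex.mul_im, hg00, hg11, hk00, hk11]
    ring
  have hgne : G.det.re ≠ 0 := ne_of_gt hGdet
  -- extract trace real
  have htrim : H.trace.im = 0 := by
    have h1 : (G.det * H.trace).im = G.det.re * H.trace.im := by
      simp [Complex.mul_im, hGdetim]
    rw [htim] at h1
    exact (mul_eq_zero.mp h1.symm).resolve_left hgne
  have htrre : G.det.re * H.trace.re = d*p + a*q - 2*(r*u+s*v) := by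
    rw [← htre]
    simp [Complex.mul_re, hGdetim]
  have hdetim : H.det.im = 0 := by
    have h1 : K.det.im = G.det.re * H.det.im := by
      rw [hdetK]; simp [Complex.mul_im, hGdetim]
    rw [hKdetim] at h1
    exact (mul_eq_zero.mp h1.symm).resolve_left hgne
  have hdetre : G.det.re * H.det.re = p*q - (u^2+v^2) := by
    have h1 : K.det.re = G.det.re * H.det.re := by
      rw [hdetK]; simp [Complex.mul_re, hGdetim, hdetim]
    rw [← h1, hKdetre]
  -- discriminant
  have hdisc : 0 ≤ H.trace.re ^ 2 - 4 * H.det.re := by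
    have key := key_ineq a d p q r s u v hGd
    rw [← htrre, ← hdetre, ← hGdetre] at key
    have hg2 : 0 < G.det.re ^ 2 := by positivity
    nlinarith [key]
  refine ⟨?_, htrim, hdetim, hdisc⟩
  -- eigenvalues
  intro μ hμ
  have hns : ¬ IsUnit (algebraMap ℂ (Matrix (Fin 2) (Fin 2) ℂ) μ - H) :=
    spectrum.mem_iff.mp hμ
  have hdet0 : (algebraMap ℂ (Matrix (Fin 2) (Fin 2) ℂ) μ - H).det = 0 := by
    by_contra h
    exact hns ((Matrix.isUnit_iff_isUnit_det _).mpr (Ne.isUnit h))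
  have hquad : μ^2 - H.trace * μ + H.det = 0 := by
    rw [det_fin_two] at hdet0
    rw [det_fin_two H, Matrix.trace_fin_two]
    simp [Matrix.algebraMap_matrix_apply] at hdet0
    linear_combination hdet0
  have him2 : 2*μ.re*μ.im - H.trace.re*μ.im = 0 := by
    have h := congrArg Complex.im hquad
    simp [pow_two, Complex.mul_im, Complex.mul_re, htrim, hdetim] at h
    linarith
  have hre2 : μ.re^2 - μ.im^2 - H.trace.re*μ.re + H.det.re = 0 := by
    have h := congrArg Complex.re hquad
    simp [pow_two, Complex.mul_im, Complex.mul_re, htrim, hdetim] at h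
    linarith
  by_contra hy
  have h2x : 2 * μ.re = H.trace.re := by
    have : (2*μ.re - H.trace.re) * μ.im = 0 := by ring_nf; linarith [him2]
    rcases mul_eq_zero.mp this with h | h
    · linarith
    · exact absurd h hy
  have hy2 : 0 < μ.im^2 := by positivity
  nlinarith [hre2, hdisc, hy2]
end
end

section
/- Let G ∈ M₂(ℂ) be Hermitian, nonzero and singular (det(G) = 0), with Pauli data (g⁰, g_R), and let H ∈ M₂(ℂ) satisfy H†·G = G·H. Then H is PT-symmetric (its characteristic polynomial has real coefficients) if and only if h_I · g_R = 0. -/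
open Matrix Complex

noncomputable section

/-- for `G = g⁰·I + g_R·σ` Hermitian, nonzero and singular, and `H`
with `H†·G = G·H`, `H` is PT-symmetric (real characteristic polynomial, i.e.
`Tr(H) ∈ ℝ` and `det(H) ∈ ℝ`) iff `h_I · g_R = 0`. -/
theorem stmt_12 (H G : Matrix (Fin 2) (Fin 2) ℂ) (h0 h1 h2 h3 : ℂ)
    (g0 : ℝ) (gR : Fin 3 → ℝ)
    (hH : H = pauliM h0 h1 h2 h3)
    (hG : G = pauliM (g0 : ℂ) ((gR 0 : ℝ) : ℂ) ((gR 1 : ℝ) : ℂ) ((gR 2 : ℝ) : ℂ))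
    (hGne : G ≠ 0) (hGsing : G.det = 0)
    (hHG : Hᴴ * G = G * H) :
    (H.trace.im = 0 ∧ H.det.im = 0) ↔ vecI h1 h2 h3 ⬝ᵥ gR = 0 := by
  subst hH hG
  -- entrywise equations
  have e00 := congrFun (congrFun hHG 0) 0
  have e01 := congrFun (congrFun hHG 0) 1
  have e10 := congrFun (congrFun hHG 1) 0
  have e11 := congrFun (congrFun hHG 1) 1
  simp [pauliM, Matrix.mul_apply, Fin.sum_univ_two, Complex.ext_iff] at e00 e01 e10 e11
  obtain ⟨-, A⟩ := e00
  obtain ⟨C2, C1⟩ := e10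
  obtain ⟨-, B⟩ := e11
  -- singularity
  simp [pauliM, Matrix.det_fin_two_of, Complex.ext_iff] at hGsing
  obtain ⟨hs, -⟩ := hGsing
  -- g0 ≠ 0
  have hg : g0 ≠ 0 := by
    intro h
    apply hGne
    have h0' : gR 0 = 0 := by nlinarith [sq_nonneg (gR 0), sq_nonneg (gR 1), sq_nonneg (gR 2)]
    have h1' : gR 1 = 0 := by nlinarith [sq_nonneg (gR 0), sq_nonneg (gR 1), sq_nonneg (gR 2)]
    have h2' : gR 2 = 0 := by nlinarith [sq_nonneg (gR 0), sq_nonneg (gR 1), sq_nonneg (gR 2)]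
    ext i j
    fin_cases i <;> fin_cases j <;> simp [pauliM, h, h0', h1', h2']
  -- reduce goal to real arithmetic
  simp [pauliM, Matrix.trace_fin_two_of, Matrix.det_fin_two_of, vecI, dotProduct,
    Fin.sum_univ_three, Complex.ext_iff]
  constructor
  · rintro ⟨hb, -⟩
    have hb0 : h0.im = 0 := by linarith
    linear_combination (-(1:ℝ)/4) * A + (-(1:ℝ)/4) * B - g0 * hb0
  · intro hdot
    have hgb : g0 * h0.im = 0 := by linear_combination (-(1:ℝ)/4) * A + (-(1:ℝ)/4) * B - hdot
    have hb0 : h0.im = 0 := by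
      rcases mul_eq_zero.mp hgb with h | h
      · exact absurd h hg
      · exact h
    refine ⟨by linarith, ?_⟩
    have key : g0 * (h1.re * h1.im + h2.re * h2.im + h3.re * h3.im) = 0 := by
      linear_combination (-h1.re / 2) * C1 + (h2.re / 2) * C2 - (h3.re / 4) * A + (h3.re / 4) * B
        - (h1.re * gR 0 + h2.re * gR 1 + h3.re * gR 2) * hb0
    have hpq : h1.re * h1.im + h2.re * h2.im + h3.re * h3.im = 0 := by
      rcases mul_eq_zero.mp key with h | h
      · exact absurd h hg
      · exact h
    linear_combination 2 * h0.re * hb0 - 2 * hpq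
end
end

section
/- There is no H ∈ M₂(ℂ) with Pauli data h⁰_I = 0, h_R = 0 and h_I ≠ 0 (the class S₂) satisfying H†·G = G·H for some nonzero singular Hermitian G ∈ M₂(ℂ). -/
open Matrix Complex

noncomputable section

/-- no `H ∈ S₂` (`h⁰_I = 0`, `h_R = 0`, `h_I ≠ 0`) satisfies
`H†·G = G·H` for a nonzero singular Hermitian `G`. -/
theorem stmt_13 : ¬ ∃ (H G : Matrix (Fin 2) (Fin 2) ℂ) (h0 h1 h2 h3 : ℂ),
    H = pauliM h0 h1 h2 h3 ∧
    h0.im = 0 ∧ vecR h1 h2 h3 = 0 ∧ vecI h1 h2 h3 ≠ 0 ∧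
    G.IsHermitian ∧ G ≠ 0 ∧ G.det = 0 ∧
    Hᴴ * G = G * H := by
  rintro ⟨H, G, h0, h1, h2, h3, rfl, h0im, hR, hI, hHerm, hG0, hdet, hcomm⟩
  have hr1 : h1.re = 0 := congrFun hR 0
  have hr2 : h2.re = 0 := congrFun hR 1
  have hr3 : h3.re = 0 := congrFun hR 2
  have h10 : G 1 0 = star (G 0 1) := (hHerm.apply 1 0).symm
  have h00 : (G 0 0).im = 0 := by
    have := hHerm.apply 0 0
    have := congrArg Complex.im this
    simp [Complex.star_def] at this
    linarith
  have h11 : (G 1 1).im = 0 := by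
    have := hHerm.apply 1 1
    have := congrArg Complex.im this
    simp [Complex.star_def] at this
    linarith
  have e00 := congrFun (congrFun hcomm 0) 0
  have e01 := congrFun (congrFun hcomm 0) 1
  have e11 := congrFun (congrFun hcomm 1) 1
  have edet := hdet
  rw [Matrix.det_fin_two] at edet
  simp only [Matrix.mul_apply, pauliM, Matrix.conjTranspose_apply, Fin.sum_univ_two, h10,
    Complex.ext_iff, Complex.star_def] at e00 e01 e11 edet
  simp at e00 e01 e11 edet
  simp only [hr1, hr2, hr3, h0im, h00, h11] at e00 e01 e11
  simp at e00 e01 e11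
  -- abbreviations
  have ea : h1.im * ((G 0 0).re + (G 1 1).re) = 0 := by linear_combination (-1 : ℝ) * e01.2
  have eb : h2.im * ((G 0 0).re + (G 1 1).re) = 0 := by linear_combination (-1 : ℝ) * e01.1
  have ec : h3.im * ((G 0 0).re + (G 1 1).re) = 0 := by
    linear_combination (1/2 : ℝ) * e11.2 - (1/2 : ℝ) * e00.2
  have hI' : h1.im ≠ 0 ∨ h2.im ≠ 0 ∨ h3.im ≠ 0 := by
    by_contra h
    push_neg at h
    exact hI (by funext i; fin_cases i <;> simp [vecI, h.1, h.2.1, h.2.2])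
  have hxy : (G 0 0).re + (G 1 1).re = 0 := by
    rcases hI' with h | h | h
    · exact (mul_eq_zero.1 ea).resolve_left h
    · exact (mul_eq_zero.1 eb).resolve_left h
    · exact (mul_eq_zero.1 ec).resolve_left h
  have hsum : (G 0 0).re ^ 2 + (G 0 1).re ^ 2 + (G 0 1).im ^ 2 = 0 := by
    linear_combination (-1 : ℝ) * edet.1 + (G 0 0).re * hxy - (G 1 1).im * h00
  have hq1 := sq_nonneg (G 0 0).re
  have hq2 := sq_nonneg (G 0 1).re
  have hq3 := sq_nonneg (G 0 1).im
  have hx : (G 0 0).re = 0 := by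
    have : (G 0 0).re ^ 2 = 0 := by linarith
    exact pow_eq_zero_iff (two_ne_zero) |>.1 this
  have hu : (G 0 1).re = 0 := by
    have : (G 0 1).re ^ 2 = 0 := by linarith
    exact pow_eq_zero_iff (two_ne_zero) |>.1 this
  have hv : (G 0 1).im = 0 := by
    have : (G 0 1).im ^ 2 = 0 := by linarith
    exact pow_eq_zero_iff (two_ne_zero) |>.1 this
  have hy : (G 1 1).re = 0 := by linarith
  apply hG0
  ext i j
  fin_cases i <;> fin_cases j <;>
    simp [h10, Complex.ext_iff, Complex.star_def, hx, hy, hu, hv, h00, h11]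
end
end

section
/- Let H ∈ M₂(ℂ) have Pauli data with h⁰_I = 0, h_R ≠ 0, h_I ≠ 0 and h_R·h_I = 0 (class S₄), and let G ∈ M₂(ℂ) be Hermitian, nonzero and singular (det(G) = 0), with H†·G = G·H. Then |h_R| ≥ |h_I|, and consequently every eigenvalue of H is real. -/
open Matrix Complex

noncomputable section

set_option maxHeartbeats 1000000 in
/-- for `H ∈ S₄` and `G` Hermitian, nonzero and singular with
`H†·G = G·H`, one has `|h_R| ≥ |h_I|`, hence every eigenvalue of `H` is real. -/
theorem stmt_14 (H G : Matrix (Fin 2) (Fin 2) ℂ) (h0 h1 h2 h3 : ℂ)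
    (hH : H = pauliM h0 h1 h2 h3)
    (h0I : h0.im = 0) (hR : vecR h1 h2 h3 ≠ 0) (hI : vecI h1 h2 h3 ≠ 0)
    (hRI : vecR h1 h2 h3 ⬝ᵥ vecI h1 h2 h3 = 0)
    (hGherm : G.IsHermitian) (hGne : G ≠ 0) (hGsing : G.det = 0)
    (hHG : Hᴴ * G = G * H) :
    norm3 (vecI h1 h2 h3) ≤ norm3 (vecR h1 h2 h3) ∧
    ∀ μ ∈ spectrum ℂ H, μ.im = 0 := by
  have hc : G 1 0 = starRingEnd ℂ (G 0 1) := (hGherm.apply 1 0).symm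
  have haim : (G 0 0).im = 0 := by
    have h := hGherm.apply 0 0
    have := congrArg Complex.im h
    simp at this; linarith
  have hdim : (G 1 1).im = 0 := by
    have h := hGherm.apply 1 1
    have := congrArg Complex.im h
    simp at this; linarith
  have hdet := hGsing
  rw [Matrix.det_fin_two] at hdet
  set A := (G 0 0).re with hA
  set D := (G 1 1).re with hD
  set p := (G 0 1).re with hp
  set q := (G 0 1).im with hq
  have detr : A * D = p ^ 2 + q ^ 2 := by
    have h := congrArg Complex.re hdet
    simp [hc, Complex.mul_re, haim, hdim] at h
    ring_nf at h ⊢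
    linarith
  have hS : A + D ≠ 0 := by
    intro h
    have hD0 : D = 0 := by nlinarith [sq_nonneg D, sq_nonneg p, sq_nonneg q]
    have hp0 : p = 0 := by nlinarith [sq_nonneg D, sq_nonneg p, sq_nonneg q]
    have hq0 : q = 0 := by nlinarith [sq_nonneg D, sq_nonneg p, sq_nonneg q]
    have hA0 : A = 0 := by linarith
    apply hGne
    have hb : G 0 1 = 0 := by
      rw [Complex.ext_iff]
      exact ⟨hp0, hq0⟩
    have ha0 : G 0 0 = 0 := by
      rw [Complex.ext_iff]
      exact ⟨hA0, haim⟩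
    have hd0 : G 1 1 = 0 := by
      rw [Complex.ext_iff]
      exact ⟨hD0, hdim⟩
    have hc0 : G 1 0 = 0 := by rw [hc, hb]; simp
    ext i j
    fin_cases i <;> fin_cases j <;> simpa
  have E01 := congrFun (congrFun hHG 0) 1
  have E00 := congrFun (congrFun hHG 0) 0
  have E11 := congrFun (congrFun hHG 1) 1
  rw [hH] at E01 E00 E11
  simp [Matrix.mul_apply, Fin.sum_univ_two, pauliM, Matrix.conjTranspose_apply, hc,
    Complex.ext_iff, h0I, haim, hdim] at E01 E00 E11
  obtain ⟨E1r, E1i⟩ := E01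
  obtain ⟨-, E0i⟩ := E00
  obtain ⟨-, E2i⟩ := E11
  have e1 : h2.re * (A - D) + 2 * h3.re * q = (A + D) * h1.im := by linarith
  have e2 : 2 * h3.re * p - h1.re * (A - D) = (A + D) * h2.im := by linarith
  have e3 : -2 * h1.re * q - 2 * h2.re * p = (A + D) * h3.im := by linarith
  have key : (A + D) ^ 2 * (h1.re ^ 2 + h2.re ^ 2 + h3.re ^ 2) -
      (A + D) ^ 2 * (h1.im ^ 2 + h2.im ^ 2 + h3.im ^ 2) =
      (2 * p * h1.re - 2 * q * h2.re + (A - D) * h3.re) ^ 2 := by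
    linear_combination
      ((A + D) * h1.im + (h2.re * (A - D) + 2 * h3.re * q)) * e1 +
      ((A + D) * h2.im + (2 * h3.re * p - h1.re * (A - D))) * e2 +
      ((A + D) * h3.im + (-2 * h1.re * q - 2 * h2.re * p)) * e3 +
      4 * (h1.re ^ 2 + h2.re ^ 2 + h3.re ^ 2) * detr
  have hS2 : 0 < (A + D) ^ 2 := by positivity
  have hXY : h1.im ^ 2 + h2.im ^ 2 + h3.im ^ 2 ≤ h1.re ^ 2 + h2.re ^ 2 + h3.re ^ 2 := by
    nlinarith [key, hS2, sq_nonneg (2 * p * h1.re - 2 * q * h2.re + (A - D) * h3.re)]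
  have hri : h1.re * h1.im + h2.re * h2.im + h3.re * h3.im = 0 := by
    simpa [vecR, vecI, dotProduct, Fin.sum_univ_three] using hRI
  constructor
  · unfold norm3
    apply Real.sqrt_le_sqrt
    have : (vecI h1 h2 h3 ⬝ᵥ vecI h1 h2 h3) ≤ (vecR h1 h2 h3 ⬝ᵥ vecR h1 h2 h3) := by
      simp [vecR, vecI, dotProduct, Fin.sum_univ_three]
      nlinarith [hXY]
    exact this
  · intro μ hμ
    rw [spectrum.mem_iff] at hμ
    rw [Matrix.isUnit_iff_isUnit_det, isUnit_iff_ne_zero, not_not] at hμ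
    rw [hH] at hμ
    rw [Matrix.det_fin_two] at hμ
    simp [pauliM, Matrix.algebraMap_matrix_apply, Complex.ext_iff] at hμ
    obtain ⟨er, ei⟩ := hμ
    have hzz : (μ.re - h0.re) * μ.im = 0 := by
      linear_combination ei / 2 + hri + (μ.re - h0.re) * h0I
    rcases mul_eq_zero.mp hzz with hz | hz
    · have e : μ.im ^ 2 = (h1.im ^ 2 + h2.im ^ 2 + h3.im ^ 2) -
          (h1.re ^ 2 + h2.re ^ 2 + h3.re ^ 2) := by
        linear_combination -er + (μ.re - h0.re) * hz + (2 * μ.im - h0.im) * h0I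
      have hz2 : μ.im ^ 2 = 0 := le_antisymm (by linarith) (sq_nonneg _)
      exact (pow_eq_zero_iff two_ne_zero).mp hz2
    · exact hz
end
end

section
/- Let G ∈ M₂(ℂ) be Hermitian, nonzero and singular (det(G) = 0). If H ∈ M₂(ℂ) is PT-symmetric (its characteristic polynomial has real coefficients) and satisfies H†·G = G·H, then every eigenvalue of H is real; equivalently (Tr(H))² − 4·det(H) ≥ 0 as a real number (H has unbroken PT-symmetry). -/
open Matrix Complex

noncomputable section

/-- Key algebraic lemma: under the hypotheses there is a real left eigenvalue `l`
of `H`, giving `det H = l·tr H − l²`. -/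
theorem stmt_15_key (H G : Matrix (Fin 2) (Fin 2) ℂ)
    (hGherm : G.IsHermitian) (hGne : G ≠ 0) (hGsing : G.det = 0)
    (hHG : Hᴴ * G = G * H) :
    ∃ l : ℝ, H.det = (l : ℂ) * H.trace - (l : ℂ)^2 := by
  have hij := fun i j => congrFun (congrFun hHG i) j
  simp only [Matrix.mul_apply, Fin.sum_univ_two, Matrix.conjTranspose_apply,
    Complex.star_def] at hij
  have eq1 := hij 0 0
  have eq2 := hij 0 1
  have eq3 := hij 1 0
  have eq4 := hij 1 1
  have hp : (starRingEnd ℂ) (G 0 0) = G 0 0 := congrFun (congrFun hGherm.eq 0) 0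
  have hs : (starRingEnd ℂ) (G 1 1) = G 1 1 := congrFun (congrFun hGherm.eq 1) 1
  have hq : (starRingEnd ℂ) (G 0 1) = G 1 0 := congrFun (congrFun hGherm.eq 1) 0
  have hq' : (starRingEnd ℂ) (G 1 0) = G 0 1 := congrFun (congrFun hGherm.eq 0) 1
  have hdetG : G 0 0 * G 1 1 - G 0 1 * G 1 0 = 0 := by
    rw [← Matrix.det_fin_two]; exact hGsing
  by_cases hp0 : G 0 0 ≠ 0
  · -- use left row vector (G 0 0, G 0 1)
    have hz : (starRingEnd ℂ) (G 0 0 * H 0 0 + G 0 1 * H 1 0)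
        = G 0 0 * H 0 0 + G 0 1 * H 1 0 := by
      rw [map_add, _root_.map_mul, _root_.map_mul, hp, hq]
      linear_combination eq1
    have hzre : G 0 0 * H 0 0 + G 0 1 * H 1 0
        = (((G 0 0 * H 0 0 + G 0 1 * H 1 0).re : ℝ) : ℂ) :=
      (Complex.conj_eq_iff_re.mp hz).symm
    have hpre : G 0 0 = (((G 0 0).re : ℝ) : ℂ) := (Complex.conj_eq_iff_re.mp hp).symm
    have hpre0 : (G 0 0).re ≠ 0 := by
      intro h; apply hp0; rw [hpre, h]; simp
    have hc : (((G 0 0).re : ℝ) : ℂ) ≠ 0 := Complex.ofReal_ne_zero.mpr hpre0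
    refine ⟨(G 0 0 * H 0 0 + G 0 1 * H 1 0).re / (G 0 0).re, ?_⟩
    set l : ℝ := (G 0 0 * H 0 0 + G 0 1 * H 1 0).re / (G 0 0).re with hl
    have hlc : (l : ℂ) = (((G 0 0 * H 0 0 + G 0 1 * H 1 0).re : ℝ) : ℂ)
        / (((G 0 0).re : ℝ) : ℂ) := by rw [hl]; push_cast; ring
    have e1 : G 0 0 * H 0 0 + G 0 1 * H 1 0 = (l : ℂ) * G 0 0 := by
      rw [hlc, div_mul_eq_mul_div, eq_div_iff hc]
      linear_combination (((G 0 0).re : ℝ) : ℂ) * hzre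
        - (((G 0 0 * H 0 0 + G 0 1 * H 1 0).re : ℝ) : ℂ) * hpre
    have e2 : G 0 0 * H 0 1 + G 0 1 * H 1 1 = (l : ℂ) * G 0 1 := by
      apply mul_left_cancel₀ hp0
      linear_combination (-(G 0 0)) * eq2 + (starRingEnd ℂ) (H 1 0) * hdetG
        + G 0 1 * eq1 + G 0 1 * e1
    rw [Matrix.det_fin_two, Matrix.trace_fin_two]
    apply mul_left_cancel₀ hp0
    linear_combination H 1 1 * e1 - H 1 0 * e2 - (l:ℂ) * e1
  · push_neg at hp0
    by_cases hs0 : G 1 1 ≠ 0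
    · -- use left row vector (G 1 0, G 1 1)
      have hz : (starRingEnd ℂ) (G 1 0 * H 0 1 + G 1 1 * H 1 1)
          = G 1 0 * H 0 1 + G 1 1 * H 1 1 := by
        rw [map_add, _root_.map_mul, _root_.map_mul, hs, hq']
        linear_combination eq4
      have hzre : G 1 0 * H 0 1 + G 1 1 * H 1 1
          = (((G 1 0 * H 0 1 + G 1 1 * H 1 1).re : ℝ) : ℂ) :=
        (Complex.conj_eq_iff_re.mp hz).symm
      have hsre : G 1 1 = (((G 1 1).re : ℝ) : ℂ) := (Complex.conj_eq_iff_re.mp hs).symm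
      have hsre0 : (G 1 1).re ≠ 0 := by
        intro h; apply hs0; rw [hsre, h]; simp
      have hc : (((G 1 1).re : ℝ) : ℂ) ≠ 0 := Complex.ofReal_ne_zero.mpr hsre0
      refine ⟨(G 1 0 * H 0 1 + G 1 1 * H 1 1).re / (G 1 1).re, ?_⟩
      set l : ℝ := (G 1 0 * H 0 1 + G 1 1 * H 1 1).re / (G 1 1).re with hl
      have hlc : (l : ℂ) = (((G 1 0 * H 0 1 + G 1 1 * H 1 1).re : ℝ) : ℂ)
          / (((G 1 1).re : ℝ) : ℂ) := by rw [hl]; push_cast; ring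
      have e1 : G 1 0 * H 0 1 + G 1 1 * H 1 1 = (l : ℂ) * G 1 1 := by
        rw [hlc, div_mul_eq_mul_div, eq_div_iff hc]
        linear_combination (((G 1 1).re : ℝ) : ℂ) * hzre
          - (((G 1 0 * H 0 1 + G 1 1 * H 1 1).re : ℝ) : ℂ) * hsre
      have e2 : G 1 0 * H 0 0 + G 1 1 * H 1 0 = (l : ℂ) * G 1 0 := by
        apply mul_left_cancel₀ hs0
        linear_combination (-(G 1 1)) * eq3 + (starRingEnd ℂ) (H 0 1) * hdetG
          + G 1 0 * eq4 + G 1 0 * e1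
      rw [Matrix.det_fin_two, Matrix.trace_fin_two]
      apply mul_left_cancel₀ hs0
      linear_combination H 0 0 * e1 - H 0 1 * e2 - (l:ℂ) * e1
    · push_neg at hs0
      exfalso
      apply hGne
      have h2 : G 0 1 * (starRingEnd ℂ) (G 0 1) = 0 := by
        rw [hq]
        linear_combination (-1 : ℂ) * hdetG + G 1 1 * hp0
      have hq0 : G 0 1 = 0 := by
        rcases mul_eq_zero.mp h2 with h | h
        · exact h
        · simpa using h
      have hq0' : G 1 0 = 0 := by rw [← hq, hq0, map_zero]
      ext i j
      fin_cases i <;> fin_cases j <;> simp [hp0, hs0, hq0, hq0']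

/-- if `G` is Hermitian, nonzero and singular and `H` is PT-symmetric
with `H†·G = G·H`, then every eigenvalue of `H` is real; equivalently
`(Tr H)² − 4·det(H) ≥ 0` (unbroken PT-symmetry). -/
theorem stmt_15 (H G : Matrix (Fin 2) (Fin 2) ℂ)
    (hGherm : G.IsHermitian) (hGne : G ≠ 0) (hGsing : G.det = 0)
    (hPT : PTSymmetric H)
    (hHG : Hᴴ * G = G * H) :
    (∀ μ ∈ spectrum ℂ H, μ.im = 0) ∧ 0 ≤ H.trace.re ^ 2 - 4 * H.det.re := by
  obtain ⟨l, hdet⟩ := stmt_15_key H G hGherm hGne hGsing hHG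
  obtain ⟨htr, _⟩ := hPT
  have htrace : H.trace = ((H.trace.re : ℝ) : ℂ) := by
    rw [Complex.ext_iff]; simp [htr]
  have hdre : H.det.re = l * H.trace.re - l ^ 2 := by
    have h := congrArg Complex.re hdet
    rw [htrace] at h
    simpa [← Complex.ofReal_pow] using h
  constructor
  · intro μ hμ
    rw [spectrum.mem_iff, Matrix.isUnit_iff_isUnit_det, isUnit_iff_ne_zero, not_not] at hμ
    rw [Matrix.det_fin_two] at hμ
    simp only [Matrix.sub_apply, Matrix.algebraMap_matrix_apply] at hμ
    norm_num at hμ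
    have hfac : (μ - (l : ℂ)) * (μ - (H.trace - l)) = 0 := by
      rw [Matrix.trace_fin_two]
      rw [Matrix.det_fin_two, Matrix.trace_fin_two] at hdet
      linear_combination hμ - hdet
    rcases mul_eq_zero.mp hfac with h | h
    · rw [sub_eq_zero] at h
      rw [h]
      simp
    · rw [sub_eq_zero] at h
      rw [h]
      simp [htr]
  · nlinarith [sq_nonneg (H.trace.re - 2 * l)]

end
end

section
/- Let G, F ∈ M₂(ℂ) be nonzero Hermitian matrices such that F is not a real scalar multiple of G. Then there exists a nonzero traceless PT-symmetric H₀ ∈ M₂(ℂ) with H₀†·G = G·H₀ and H₀†·F = F·H₀, and every traceless PT-symmetric H ∈ M₂(ℂ) satisfying H†·G = G·H and H†·F = F·H is a real scalar multiple of H₀; i.e., the traceless PT-symmetric matrix simultaneously pseudo-Hermitian with respect to G and F is unique up to real scaling. -/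
open Matrix Complex

noncomputable section

private lemma sumsq3_ne (w1 w2 w3 : ℝ) (hw : ¬(w1=0 ∧ w2=0 ∧ w3=0)) :
    w1^2+w2^2+w3^2 ≠ 0 := by
  intro h
  exact hw ⟨by nlinarith [sq_nonneg w1, sq_nonneg w2, sq_nonneg w3],
    by nlinarith [sq_nonneg w1, sq_nonneg w2, sq_nonneg w3],
    by nlinarith [sq_nonneg w1, sq_nonneg w2, sq_nonneg w3]⟩

private lemma sumsq4_ne (w1 w2 w3 w4 : ℝ) (hw : ¬(w1=0 ∧ w2=0 ∧ w3=0 ∧ w4=0)) :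
    w1^2+w2^2+w3^2+w4^2 ≠ 0 := by
  intro h
  exact hw ⟨by nlinarith [sq_nonneg w1, sq_nonneg w2, sq_nonneg w3, sq_nonneg w4],
    by nlinarith [sq_nonneg w1, sq_nonneg w2, sq_nonneg w3, sq_nonneg w4],
    by nlinarith [sq_nonneg w1, sq_nonneg w2, sq_nonneg w3, sq_nonneg w4],
    by nlinarith [sq_nonneg w1, sq_nonneg w2, sq_nonneg w3, sq_nonneg w4]⟩

private lemma parallel3 (w1 w2 w3 u1 u2 u3 : ℝ) (hw : ¬(w1=0∧w2=0∧w3=0))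
    (h12 : w1*u2 - w2*u1 = 0) (h23 : w2*u3 - w3*u2 = 0) (h31 : w3*u1 - w1*u3 = 0) :
    ∃ t:ℝ, u1 = t*w1 ∧ u2 = t*w2 ∧ u3 = t*w3 := by
  have hs := sumsq3_ne w1 w2 w3 hw
  refine ⟨(w1*u1+w2*u2+w3*u3)/(w1^2+w2^2+w3^2), ?_, ?_, ?_⟩ <;>
    rw [div_mul_eq_mul_div, eq_div_iff hs]
  · linear_combination (-w2)*h12 + w3*h31
  · linear_combination w1*h12 - w3*h23
  · linear_combination w2*h23 - w1*h31

private lemma prop4 (a d p q a' d' p' q' : ℝ) (hG : ¬(a=0∧d=0∧p=0∧q=0))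
    (m1 : a*d' - d*a' = 0) (m2 : a*p' - p*a' = 0) (m3 : a*q' - q*a' = 0)
    (m4 : d*p' - p*d' = 0) (m5 : d*q' - q*d' = 0) (m6 : p*q' - q*p' = 0) :
    ∃ c:ℝ, a' = c*a ∧ d' = c*d ∧ p' = c*p ∧ q' = c*q := by
  have hs := sumsq4_ne a d p q hG
  refine ⟨(a*a'+d*d'+p*p'+q*q')/(a^2+d^2+p^2+q^2), ?_, ?_, ?_, ?_⟩ <;>
    rw [div_mul_eq_mul_div, eq_div_iff hs]
  · linear_combination (-d)*m1 - p*m2 - q*m3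
  · linear_combination a*m1 - p*m4 - q*m5
  · linear_combination a*m2 + d*m4 - q*m6
  · linear_combination a*m3 + d*m5 + p*m6

private lemma core_pauli (g0 g1 g2 g3 f0 f1 f2 f3 u1 u2 u3 v1 v2 v3 : ℝ)
    (hG : ¬(g0=0∧g1=0∧g2=0∧g3=0))
    (hmul : ∀ c:ℝ, ¬(f0=c*g0∧f1=c*g1∧f2=c*g2∧f3=c*g3))
    (e1 : g2*u3 - g3*u2 + g0*v1 = 0)
    (e2 : g3*u1 - g1*u3 + g0*v2 = 0)
    (e3 : g1*u2 - g2*u1 + g0*v3 = 0)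
    (e4 : g1*v1 + g2*v2 + g3*v3 = 0)
    (e5 : f2*u3 - f3*u2 + f0*v1 = 0)
    (e6 : f3*u1 - f1*u3 + f0*v2 = 0)
    (e7 : f1*u2 - f2*u1 + f0*v3 = 0)
    (e8 : f1*v1 + f2*v2 + f3*v3 = 0) :
    ∃ c:ℝ, u1 = c*(g0*f1-f0*g1) ∧ u2 = c*(g0*f2-f0*g2) ∧ u3 = c*(g0*f3-f0*g3)
      ∧ v1 = c*(g3*f2-g2*f3) ∧ v2 = c*(g1*f3-g3*f1) ∧ v3 = c*(g2*f1-g1*f2) := by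
  by_cases hg0 : g0 = 0
  · subst hg0
    have hg : ¬(g1=0∧g2=0∧g3=0) := fun ⟨h1,h2,h3⟩ => hG ⟨rfl,h1,h2,h3⟩
    obtain ⟨s, hs1, hs2, hs3⟩ := parallel3 g1 g2 g3 u1 u2 u3 hg
      (by linear_combination e3) (by linear_combination e1) (by linear_combination e2)
    by_cases hf0 : f0 = 0
    · by_cases hgf : (g2*f3-g3*f2 = 0) ∧ (g3*f1-g1*f3 = 0) ∧ (g1*f2-g2*f1 = 0)
      · obtain ⟨t, ht1, ht2, ht3⟩ := parallel3 g1 g2 g3 f1 f2 f3 hg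
          hgf.2.2 hgf.1 hgf.2.1
        exact absurd ⟨by rw [hf0]; ring, ht1, ht2, ht3⟩ (hmul t)
      · subst hf0
        have hs0 : s = 0 := by
          have c1 : s*(g2*f3-g3*f2) = 0 := by
            linear_combination -e5 + f2*hs3 - f3*hs2
          have c2 : s*(g3*f1-g1*f3) = 0 := by
            linear_combination -e6 + f3*hs1 - f1*hs3
          have c3 : s*(g1*f2-g2*f1) = 0 := by
            linear_combination -e7 + f1*hs2 - f2*hs1
          by_contra hs0
          exact hgf ⟨by have := mul_eq_zero.mp c1; tauto,
            by have := mul_eq_zero.mp c2; tauto,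
            by have := mul_eq_zero.mp c3; tauto⟩
        obtain ⟨r, hr1, hr2, hr3⟩ := parallel3 (g2*f3-g3*f2) (g3*f1-g1*f3) (g1*f2-g2*f1)
          v1 v2 v3 hgf
          (by linear_combination f3*e4 - g3*e8) (by linear_combination f1*e4 - g1*e8)
          (by linear_combination f2*e4 - g2*e8)
        exact ⟨-r, by rw [hs1, hs0]; ring, by rw [hs2, hs0]; ring, by rw [hs3, hs0]; ring,
          by rw [hr1]; ring, by rw [hr2]; ring, by rw [hr3]; ring⟩
    · refine ⟨-s/f0, ?_, ?_, ?_, ?_, ?_, ?_⟩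
      · field_simp
        linear_combination f0*hs1
      · field_simp
        linear_combination f0*hs2
      · field_simp
        linear_combination f0*hs3
      · rw [div_mul_eq_mul_div, eq_div_iff hf0]
        linear_combination e5 - f2*hs3 + f3*hs2
      · rw [div_mul_eq_mul_div, eq_div_iff hf0]
        linear_combination e6 - f3*hs1 + f1*hs3
      · rw [div_mul_eq_mul_div, eq_div_iff hf0]
        linear_combination e7 - f1*hs2 + f2*hs1
  · by_cases hw : (g0*f1-f0*g1 = 0) ∧ (g0*f2-f0*g2 = 0) ∧ (g0*f3-f0*g3 = 0)
    · exact absurd ⟨by field_simp,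
        by rw [div_mul_eq_mul_div, eq_div_iff hg0]; linear_combination hw.1,
        by rw [div_mul_eq_mul_div, eq_div_iff hg0]; linear_combination hw.2.1,
        by rw [div_mul_eq_mul_div, eq_div_iff hg0]; linear_combination hw.2.2⟩ (hmul (f0/g0))
    · obtain ⟨t, ht1, ht2, ht3⟩ := parallel3 (g0*f1-f0*g1) (g0*f2-f0*g2) (g0*f3-f0*g3)
        u1 u2 u3 hw
        (by linear_combination g0*e7 - f0*e3) (by linear_combination g0*e5 - f0*e1)
        (by linear_combination g0*e6 - f0*e2)
      refine ⟨t, ht1, ht2, ht3, ?_, ?_, ?_⟩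
      · exact mul_left_cancel₀ hg0 (by linear_combination e1 - g2*ht3 + g3*ht2)
      · exact mul_left_cancel₀ hg0 (by linear_combination e2 - g3*ht1 + g1*ht3)
      · exact mul_left_cancel₀ hg0 (by linear_combination e3 - g1*ht2 + g2*ht1)

private lemma core_entries (a d p q a' d' p' q' x y b1 b2 c1 c2 : ℝ)
    (hG : ¬(a=0∧d=0∧p=0∧q=0))
    (hmul : ∀ c:ℝ, ¬(a'=c*a ∧ d'=c*d ∧ p'=c*p ∧ q'=c*q))
    (eA : a*y + q*c1 + p*c2 = 0) (eB : 2*p*x + d*c1 - a*b1 = 0)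
    (eC : 2*q*x - d*c2 - a*b2 = 0) (eD : d*y + q*b1 - p*b2 = 0)
    (eA' : a'*y + q'*c1 + p'*c2 = 0) (eB' : 2*p'*x + d'*c1 - a'*b1 = 0)
    (eC' : 2*q'*x - d'*c2 - a'*b2 = 0) (eD' : d'*y + q'*b1 - p'*b2 = 0) :
    ∃ c:ℝ, x = c*(d*a' - a*d') ∧ y = c*(2*(p*q'-q*p')) ∧
      b1 = c*(2*(d*p'-d'*p)) ∧ b2 = c*(2*(d*q'-d'*q)) ∧
      c1 = c*(2*(a*p'-a'*p)) ∧ c2 = c*(2*(a'*q-a*q')) := by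
  have hGp : ¬((a+d)/2=0 ∧ p=0 ∧ -q=0 ∧ (a-d)/2=0) := by
    rintro ⟨h1,h2,h3,h4⟩
    exact hG ⟨by linarith, by linarith, by linarith [neg_eq_zero.mp h3], by linarith⟩
  have hmulp : ∀ c:ℝ, ¬((a'+d')/2=c*((a+d)/2) ∧ p'=c*p ∧ -q'=c*(-q) ∧ (a'-d')/2=c*((a-d)/2)) := by
    rintro c ⟨h1,h2,h3,h4⟩
    exact hmul c ⟨by linarith, by linarith, h2, by linarith⟩
  obtain ⟨c, hu1, hu2, hu3, hv1, hv2, hv3⟩ :=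
    core_pauli ((a+d)/2) p (-q) ((a-d)/2) ((a'+d')/2) p' (-q') ((a'-d')/2)
      ((b1+c1)/2) ((c2-b2)/2) x ((b2+c2)/2) ((b1-c1)/2) y
      hGp hmulp
      (by linear_combination (-1/2)*eC) (by linear_combination (-1/2)*eB)
      (by linear_combination (1/2)*eA + (1/2)*eD) (by linear_combination (1/2)*eA - (1/2)*eD)
      (by linear_combination (-1/2)*eC') (by linear_combination (-1/2)*eB')
      (by linear_combination (1/2)*eA' + (1/2)*eD') (by linear_combination (1/2)*eA' - (1/2)*eD')
  exact ⟨c/2, by linear_combination hu3, by linear_combination hv3,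
    by linear_combination hu1 + hv2, by linear_combination hv1 - hu2,
    by linear_combination hu1 - hv2, by linear_combination hv1 + hu2⟩

private lemma reim_zero (r s : ℝ) (h : (r:ℂ) + (s:ℂ)*Complex.I = 0) : r = 0 ∧ s = 0 := by
  constructor
  · simpa using congrArg Complex.re h
  · simpa using congrArg Complex.im h

private lemma realeqs (G H : Matrix (Fin 2) (Fin 2) ℂ) (a d p q x y b1 b2 c1 c2 : ℝ)
    (hGa : G 0 0 = (a:ℂ)) (hGd : G 1 1 = (d:ℂ))
    (hG01 : G 0 1 = (p:ℂ) + (q:ℂ)*Complex.I) (hG10 : G 1 0 = (p:ℂ) - (q:ℂ)*Complex.I)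
    (hH00 : H 0 0 = (x:ℂ) + (y:ℂ)*Complex.I)
    (hH01 : H 0 1 = (b1:ℂ) + (b2:ℂ)*Complex.I)
    (hH10 : H 1 0 = (c1:ℂ) + (c2:ℂ)*Complex.I)
    (hH11 : H 1 1 = -((x:ℂ) + (y:ℂ)*Complex.I))
    (hcomm : Hᴴ * G = G * H) :
    a*y + q*c1 + p*c2 = 0 ∧ 2*p*x + d*c1 - a*b1 = 0 ∧
      2*q*x - d*c2 - a*b2 = 0 ∧ d*y + q*b1 - p*b2 = 0 := by
  have E00 : star (H 0 0) * G 0 0 + star (H 1 0) * G 1 0 = G 0 0 * H 0 0 + G 0 1 * H 1 0 := by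
    have h := congrFun (congrFun hcomm 0) 0
    simpa [Matrix.mul_apply, Fin.sum_univ_two, Matrix.conjTranspose_apply] using h
  have E01 : star (H 0 0) * G 0 1 + star (H 1 0) * G 1 1 = G 0 0 * H 0 1 + G 0 1 * H 1 1 := by
    have h := congrFun (congrFun hcomm 0) 1
    simpa [Matrix.mul_apply, Fin.sum_univ_two, Matrix.conjTranspose_apply] using h
  have E11 : star (H 0 1) * G 0 1 + star (H 1 1) * G 1 1 = G 1 0 * H 0 1 + G 1 1 * H 1 1 := by
    have h := congrFun (congrFun hcomm 1) 1
    simpa [Matrix.mul_apply, Fin.sum_univ_two, Matrix.conjTranspose_apply] using h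
  have key00 : ((2*(a*y + q*c1 + p*c2) : ℝ) : ℂ) * Complex.I =
      (G 0 0 * H 0 0 + G 0 1 * H 1 0) - (star (H 0 0) * G 0 0 + star (H 1 0) * G 1 0) := by
    rw [hH00, hH10, hGa, hG01, hG10]
    simp only [Complex.star_def, map_add, _root_.map_mul, Complex.conj_ofReal, Complex.conj_I]
    apply Complex.ext <;> simp <;> ring
  have key01 : ((2*p*x + d*c1 - a*b1 : ℝ) : ℂ) + ((2*q*x - d*c2 - a*b2 : ℝ):ℂ)*Complex.I =
      (star (H 0 0) * G 0 1 + star (H 1 0) * G 1 1) - (G 0 0 * H 0 1 + G 0 1 * H 1 1) := by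
    rw [hH00, hH01, hH10, hH11, hGa, hGd, hG01]
    simp only [Complex.star_def, map_add, _root_.map_mul, Complex.conj_ofReal, Complex.conj_I]
    apply Complex.ext <;> simp <;> ring
  have key11 : ((2*(d*y + q*b1 - p*b2) : ℝ) : ℂ) * Complex.I =
      (star (H 0 1) * G 0 1 + star (H 1 1) * G 1 1) - (G 1 0 * H 0 1 + G 1 1 * H 1 1) := by
    rw [hH01, hH11, hGd, hG01, hG10]
    simp only [Complex.star_def, map_add, _root_.map_mul, map_neg, Complex.conj_ofReal,
      Complex.conj_I]
    apply Complex.ext <;> simp <;> ring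
  have eA : a*y + q*c1 + p*c2 = 0 := by
    rw [← E00, sub_self] at key00
    have h2 := mul_eq_zero.mp key00
    simp [Complex.I_ne_zero] at h2
    exact_mod_cast h2
  have eD : d*y + q*b1 - p*b2 = 0 := by
    rw [E11, sub_self] at key11
    have h2 := mul_eq_zero.mp key11
    simp [Complex.I_ne_zero] at h2
    exact_mod_cast h2
  have eBC := reim_zero _ _ (by rw [key01, E01, sub_self])
  exact ⟨eA, eBC.1, eBC.2, eD⟩

/-- for nonzero Hermitian `G, F` with `F` not a real multiple of `G`,
there is a nonzero traceless PT-symmetric `H₀` pseudo-Hermitian w.r.t. both `G` and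
`F`, unique up to real scaling. -/
theorem stmt_16 (G F : Matrix (Fin 2) (Fin 2) ℂ)
    (hGherm : G.IsHermitian) (hFherm : F.IsHermitian)
    (hGne : G ≠ 0) (hFne : F ≠ 0)
    (hnotmul : ¬ ∃ c : ℝ, F = (c : ℂ) • G) :
    ∃ H₀ : Matrix (Fin 2) (Fin 2) ℂ, H₀ ≠ 0 ∧ H₀.trace = 0 ∧ PTSymmetric H₀ ∧
      H₀ᴴ * G = G * H₀ ∧ H₀ᴴ * F = F * H₀ ∧
      ∀ H : Matrix (Fin 2) (Fin 2) ℂ, H.trace = 0 → PTSymmetric H →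
        Hᴴ * G = G * H → Hᴴ * F = F * H → ∃ c : ℝ, H = (c : ℂ) • H₀ := by
  classical
  set a := (G 0 0).re with ha
  set d := (G 1 1).re with hd
  set p := (G 0 1).re with hp
  set q := (G 0 1).im with hq
  set a' := (F 0 0).re with ha'
  set d' := (F 1 1).re with hd'
  set p' := (F 0 1).re with hp'
  set q' := (F 0 1).im with hq'
  have hGa : G 0 0 = (a:ℂ) := by
    have h := hGherm.apply 0 0
    rw [Complex.star_def] at h
    exact (Complex.conj_eq_iff_re.mp h).symm
  have hGd : G 1 1 = (d:ℂ) := by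
    have h := hGherm.apply 1 1
    rw [Complex.star_def] at h
    exact (Complex.conj_eq_iff_re.mp h).symm
  have hG01 : G 0 1 = (p:ℂ) + (q:ℂ)*Complex.I := (Complex.re_add_im (G 0 1)).symm
  have hG10 : G 1 0 = (p:ℂ) - (q:ℂ)*Complex.I := by
    have h := hGherm.apply 1 0
    rw [← h, hG01, Complex.star_def, map_add, _root_.map_mul, Complex.conj_ofReal,
      Complex.conj_ofReal, Complex.conj_I]
    ring
  have hFa : F 0 0 = (a':ℂ) := by
    have h := hFherm.apply 0 0
    rw [Complex.star_def] at h
    exact (Complex.conj_eq_iff_re.mp h).symm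
  have hFd : F 1 1 = (d':ℂ) := by
    have h := hFherm.apply 1 1
    rw [Complex.star_def] at h
    exact (Complex.conj_eq_iff_re.mp h).symm
  have hF01 : F 0 1 = (p':ℂ) + (q':ℂ)*Complex.I := (Complex.re_add_im (F 0 1)).symm
  have hF10 : F 1 0 = (p':ℂ) - (q':ℂ)*Complex.I := by
    have h := hFherm.apply 1 0
    rw [← h, hF01, Complex.star_def, map_add, _root_.map_mul, Complex.conj_ofReal,
      Complex.conj_ofReal, Complex.conj_I]
    ring
  -- the candidate matrix, described only through its entries
  obtain ⟨H₀, hE00, hE01, hE10, hE11⟩ :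
      ∃ K : Matrix (Fin 2) (Fin 2) ℂ,
        K 0 0 = ((d*a' - a*d' : ℝ):ℂ) + ((2*(p*q'-q*p') : ℝ):ℂ)*Complex.I ∧
        K 0 1 = ((2*(d*p'-d'*p) : ℝ):ℂ) + ((2*(d*q'-d'*q) : ℝ):ℂ)*Complex.I ∧
        K 1 0 = ((2*(a*p'-a'*p) : ℝ):ℂ) + ((2*(a'*q-a*q') : ℝ):ℂ)*Complex.I ∧
        K 1 1 = -(((d*a' - a*d' : ℝ):ℂ) + ((2*(p*q'-q*p') : ℝ):ℂ)*Complex.I) := by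
    have htrG : G.trace = (a:ℂ) + (d:ℂ) := by rw [Matrix.trace_fin_two, hGa, hGd]
    have htrF : F.trace = (a':ℂ) + (d':ℂ) := by rw [Matrix.trace_fin_two, hFa, hFd]
    refine ⟨G.trace • F - F.trace • G - (G*F - F*G), ?_, ?_, ?_, ?_⟩ <;>
    · simp only [Matrix.sub_apply, Matrix.smul_apply, Matrix.mul_apply, Fin.sum_univ_two,
        smul_eq_mul, htrG, htrF, hGa, hGd, hG01, hG10, hFa, hFd, hF01, hF10]
      apply Complex.ext <;> simp <;> ring
  -- real-form nonvanishing and non-multiple hypotheses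
  have hGreal : ¬(a=0∧d=0∧p=0∧q=0) := by
    rintro ⟨h1,h2,h3,h4⟩
    apply hGne
    ext i j
    fin_cases i <;> fin_cases j <;>
      simp [hGa, hGd, hG01, hG10, h1, h2, h3, h4]
  have hmulreal : ∀ c:ℝ, ¬(a'=c*a ∧ d'=c*d ∧ p'=c*p ∧ q'=c*q) := by
    rintro c ⟨h1,h2,h3,h4⟩
    apply hnotmul
    refine ⟨c, ?_⟩
    ext i j
    fin_cases i <;> fin_cases j <;>
      simp [Matrix.smul_apply, hGa, hGd, hG01, hG10, hFa, hFd, hF01, hF10, h1, h2, h3, h4,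
        smul_eq_mul] <;> push_cast <;> ring
  have htr0 : H₀.trace = 0 := by
    rw [Matrix.trace_fin_two, hE00, hE11]
    ring
  refine ⟨H₀, ?_, htr0, ⟨by rw [htr0]; simp, ?_⟩, ?_, ?_, ?_⟩
  · -- H₀ ≠ 0
    intro h0
    have z00 : H₀ 0 0 = 0 := by rw [h0]; rfl
    have z01 : H₀ 0 1 = 0 := by rw [h0]; rfl
    have z10 : H₀ 1 0 = 0 := by rw [h0]; rfl
    rw [hE00] at z00
    rw [hE01] at z01
    rw [hE10] at z10
    obtain ⟨k1, k6⟩ := reim_zero _ _ z00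
    obtain ⟨k4, k5⟩ := reim_zero _ _ z01
    obtain ⟨k2, k3⟩ := reim_zero _ _ z10
    obtain ⟨c, hc⟩ := prop4 a d p q a' d' p' q' hGreal
      (by linarith) (by linarith) (by linarith) (by linarith) (by linarith) (by linarith)
    exact hmulreal c hc
  · -- det is real
    rw [Matrix.det_fin_two, hE00, hE01, hE10, hE11]
    simp
    ring
  · -- pseudo-hermitian wrt G
    ext i j
    fin_cases i <;> fin_cases j <;>
      · simp only [Fin.zero_eta, Fin.mk_one, Matrix.mul_apply, Matrix.conjTranspose_apply,
          Fin.sum_univ_two, hE00, hE01, hE10, hE11, hGa, hGd, hG01, hG10, Complex.star_def, map_add,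
          _root_.map_mul, map_neg, Complex.conj_ofReal, Complex.conj_I]
        apply Complex.ext <;> simp <;> ring
  · -- pseudo-hermitian wrt F
    ext i j
    fin_cases i <;> fin_cases j <;>
      · simp only [Fin.zero_eta, Fin.mk_one, Matrix.mul_apply, Matrix.conjTranspose_apply,
          Fin.sum_univ_two, hE00, hE01, hE10, hE11, hFa, hFd, hF01, hF10, Complex.star_def, map_add,
          _root_.map_mul, map_neg, Complex.conj_ofReal, Complex.conj_I]
        apply Complex.ext <;> simp <;> ring
  · -- uniqueness
    intro H htr hPT hHG hHF
    set x := (H 0 0).re with hx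
    set y := (H 0 0).im with hy
    set b1 := (H 0 1).re with hb1
    set b2 := (H 0 1).im with hb2
    set c1 := (H 1 0).re with hc1
    set c2 := (H 1 0).im with hc2
    have hH00 : H 0 0 = (x:ℂ) + (y:ℂ)*Complex.I := (Complex.re_add_im (H 0 0)).symm
    have hH01 : H 0 1 = (b1:ℂ) + (b2:ℂ)*Complex.I := (Complex.re_add_im (H 0 1)).symm
    have hH10 : H 1 0 = (c1:ℂ) + (c2:ℂ)*Complex.I := (Complex.re_add_im (H 1 0)).symm
    have hH11 : H 1 1 = -((x:ℂ) + (y:ℂ)*Complex.I) := by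
      rw [Matrix.trace_fin_two] at htr
      rw [← hH00]
      linear_combination htr
    obtain ⟨eA, eB, eC, eD⟩ := realeqs G H a d p q x y b1 b2 c1 c2
      hGa hGd hG01 hG10 hH00 hH01 hH10 hH11 hHG
    obtain ⟨eA', eB', eC', eD'⟩ := realeqs F H a' d' p' q' x y b1 b2 c1 c2
      hFa hFd hF01 hF10 hH00 hH01 hH10 hH11 hHF
    obtain ⟨c, hcx, hcy, hcb1, hcb2, hcc1, hcc2⟩ :=
      core_entries a d p q a' d' p' q' x y b1 b2 c1 c2 hGreal hmulreal
        eA eB eC eD eA' eB' eC' eD'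
    refine ⟨c, ?_⟩
    ext i j
    fin_cases i <;> fin_cases j <;>
      simp only [Fin.zero_eta, Fin.mk_one, Matrix.smul_apply, smul_eq_mul]
    · rw [hH00, hE00, hcx, hcy]; push_cast; ring
    · rw [hH01, hE01, hcb1, hcb2]; push_cast; ring
    · rw [hH10, hE10, hcc1, hcc2]; push_cast; ring
    · rw [hH11, hE11, hcx, hcy]; push_cast; ring
end
end

section
/- Let G, F ∈ M₂(ℂ) be invertible Hermitian matrices such that F is not a real scalar multiple of G. Then there exists a nonzero traceless PT-symmetric H₀ ∈ M₂(ℂ) with H₀†·G = G·H₀ and H₀†·F = F·H₀, unique up to a real scalar among traceless PT-symmetric matrices with both properties, and moreover H₀ commutes with G⁻¹·F and with F⁻¹·G. -/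
open Matrix Complex

noncomputable section

lemma commutant2 (M H : Matrix (Fin 2) (Fin 2) ℂ)
    (hns : ¬ ∃ c : ℂ, M = c • (1 : Matrix (Fin 2) (Fin 2) ℂ))
    (htr : H.trace = 0) (hc : H * M = M * H) :
    ∃ z : ℂ, H = z • (M - (M.trace / 2) • 1) := by
  have e00 := congrFun (congrFun hc 0) 0
  have e01 := congrFun (congrFun hc 0) 1
  have e10 := congrFun (congrFun hc 1) 0
  simp only [Matrix.mul_apply, Fin.sum_univ_two] at e00 e01 e10
  rw [Matrix.trace_fin_two] at htr
  have hs : H 1 1 = -H 0 0 := by linear_combination htr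
  have build : ∀ z : ℂ, H 0 0 = z * (M 0 0 - (M 0 0 + M 1 1) / 2) →
      H 0 1 = z * M 0 1 → H 1 0 = z * M 1 0 →
      H = z • (M - (M.trace / 2) • 1) := by
    intro z h1 h2 h3
    ext i j
    fin_cases i <;> fin_cases j
    · simpa [Matrix.trace_fin_two] using h1
    · simpa [Matrix.trace_fin_two] using h2
    · simpa [Matrix.trace_fin_two] using h3
    · simp [Matrix.trace_fin_two, Matrix.one_apply]
      linear_combination hs - h1
  by_cases had : M 0 0 = M 1 1
  · have hbc : M 0 1 ≠ 0 ∨ M 1 0 ≠ 0 := by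
      by_contra hcon
      push_neg at hcon
      exact hns ⟨M 0 0, by ext i j; fin_cases i <;> fin_cases j <;>
        simp [Matrix.one_apply, hcon.1, hcon.2, had]⟩
    rcases hbc with hb | hcc
    · have hp : H 0 0 = 0 := by
        have h2 : 2 * H 0 0 * M 0 1 = 0 := by
          linear_combination e01 + M 0 1 * hs + H 0 1 * had
        rcases mul_eq_zero.mp h2 with h | h
        · rcases mul_eq_zero.mp h with h' | h'
          · exact absurd h' two_ne_zero
          · exact h'
        · exact absurd h hb
      refine ⟨H 0 1 / M 0 1, build _ ?_ ?_ ?_⟩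
      · rw [hp, had]; ring
      · field_simp
      · rw [div_mul_eq_mul_div, eq_div_iff hb]
        linear_combination -e00
    · have hp : H 0 0 = 0 := by
        have h2 : 2 * H 0 0 * M 1 0 = 0 := by
          linear_combination H 1 0 * had + M 1 0 * hs - e10
        rcases mul_eq_zero.mp h2 with h | h
        · rcases mul_eq_zero.mp h with h' | h'
          · exact absurd h' two_ne_zero
          · exact h'
        · exact absurd h hcc
      refine ⟨H 1 0 / M 1 0, build _ ?_ ?_ ?_⟩
      · rw [hp, had]; ring
      · rw [div_mul_eq_mul_div, eq_div_iff hcc]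
        linear_combination e00
      · field_simp
  · have hd : M 0 0 - M 1 1 ≠ 0 := sub_ne_zero.mpr had
    refine ⟨2 * H 0 0 / (M 0 0 - M 1 1), build _ ?_ ?_ ?_⟩
    · field_simp
      ring
    · rw [div_mul_eq_mul_div, eq_div_iff hd]
      linear_combination -e01 - M 0 1 * hs
    · rw [div_mul_eq_mul_div, eq_div_iff hd]
      linear_combination e10 - M 1 0 * hs

/-- for invertible Hermitian `G, F` with `F` not a real multiple of `G`,
there is a nonzero traceless PT-symmetric `H₀`, pseudo-Hermitian w.r.t. both `G` and
`F` and unique up to real scaling among such, which commutes with `G⁻¹·F` and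
`F⁻¹·G`. -/
theorem stmt_17 (G F : Matrix (Fin 2) (Fin 2) ℂ)
    (hGherm : G.IsHermitian) (hFherm : F.IsHermitian)
    (hGinv : IsUnit G.det) (hFinv : IsUnit F.det)
    (hnotmul : ¬ ∃ c : ℝ, F = (c : ℂ) • G) :
    ∃ H₀ : Matrix (Fin 2) (Fin 2) ℂ, H₀ ≠ 0 ∧ H₀.trace = 0 ∧ PTSymmetric H₀ ∧
      H₀ᴴ * G = G * H₀ ∧ H₀ᴴ * F = F * H₀ ∧
      (∀ H : Matrix (Fin 2) (Fin 2) ℂ, H.trace = 0 → PTSymmetric H →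
        Hᴴ * G = G * H → Hᴴ * F = F * H → ∃ c : ℝ, H = (c : ℂ) • H₀) ∧
      H₀ * (G⁻¹ * F) = (G⁻¹ * F) * H₀ ∧
      H₀ * (F⁻¹ * G) = (F⁻¹ * G) * H₀ := by
  have hGG : G⁻¹ * G = 1 := nonsing_inv_mul G hGinv
  have hGG' : G * G⁻¹ = 1 := mul_nonsing_inv G hGinv
  have hFF : F⁻¹ * F = 1 := nonsing_inv_mul F hFinv
  have hFF' : F * F⁻¹ = 1 := mul_nonsing_inv F hFinv
  set M : Matrix (Fin 2) (Fin 2) ℂ := G⁻¹ * F with hMdef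
  have hMH : Mᴴ = F * G⁻¹ := by
    rw [hMdef, conjTranspose_mul, conjTranspose_nonsing_inv, hGherm.eq, hFherm.eq]
  have hGM : G * M = F := by rw [hMdef, ← mul_assoc, hGG', one_mul]
  have hMG : Mᴴ * G = G * M := by rw [hMH, mul_assoc, hGG, mul_one, hGM]
  have hMF : Mᴴ * F = F * M := by rw [hMH, mul_assoc, hMdef]
  have htreal : star M.trace = M.trace := by
    rw [← Matrix.trace_conjTranspose, hMH, Matrix.trace_mul_comm, hMdef]
  have htim : M.trace.im = 0 := Complex.conj_eq_iff_im.mp htreal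
  have hFne : ∀ c : ℂ, c.im = 0 → F ≠ c • G := by
    rintro c hci rfl
    exact hnotmul ⟨c.re, by congr 1; exact (Complex.ext (by simp) (by simp [hci])).symm⟩
  set H₀ : Matrix (Fin 2) (Fin 2) ℂ := M - (M.trace / 2) • 1 with hH0def
  have hts : star (M.trace / 2) = M.trace / 2 := by
    rw [star_div₀, htreal]; norm_num
  have hH0H : H₀ᴴ = Mᴴ - (M.trace / 2) • 1 := by
    rw [hH0def, conjTranspose_sub, conjTranspose_smul, conjTranspose_one, hts]
  have hH0G : H₀ᴴ * G = G * H₀ := by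
    rw [hH0H, hH0def, Matrix.sub_mul, Matrix.mul_sub, Matrix.smul_mul, Matrix.mul_smul,
      one_mul, mul_one, hMG]
  have hH0F : H₀ᴴ * F = F * H₀ := by
    rw [hH0H, hH0def, Matrix.sub_mul, Matrix.mul_sub, Matrix.smul_mul, Matrix.mul_smul,
      one_mul, mul_one, hMF]
  have hH0ne : H₀ ≠ 0 := by
    intro h
    have hM : M = (M.trace / 2) • 1 := by
      have := sub_eq_zero.mp h; exact this
    have hF : F = (M.trace / 2) • G := by
      conv_lhs => rw [← hGM, hM]
      rw [Matrix.mul_smul, mul_one]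
    exact hFne _ (by simp [htim]) hF
  have htr0 : H₀.trace = 0 := by
    rw [hH0def, Matrix.trace_sub, Matrix.trace_smul, Matrix.trace_one]
    simp
  have hdetG : G.det ≠ 0 := hGinv.ne_zero
  have hdetreal : star H₀.det = H₀.det := by
    have h1 : (H₀ᴴ * G).det = (G * H₀).det := by rw [hH0G]
    rw [Matrix.det_mul, Matrix.det_mul, Matrix.det_conjTranspose] at h1
    have := mul_comm G.det H₀.det ▸ h1
    exact mul_right_cancel₀ hdetG (by rw [h1, mul_comm])
  have hPT : PTSymmetric H₀ := ⟨by rw [htr0]; simp, Complex.conj_eq_iff_im.mp hdetreal⟩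
  have hcomM : H₀ * M = M * H₀ := by
    rw [hH0def, Matrix.sub_mul, Matrix.mul_sub, Matrix.smul_mul, Matrix.mul_smul,
      one_mul, mul_one]
  have hns : ¬ ∃ c : ℂ, M = c • (1 : Matrix (Fin 2) (Fin 2) ℂ) := by
    rintro ⟨c, hcM⟩
    have hci : c.im = 0 := by
      have : M.trace = c * 2 := by rw [hcM, Matrix.trace_smul, Matrix.trace_one]; simp
      have := htim
      rw [‹M.trace = c * 2›] at this
      simpa using this
    exact hFne c hci (by rw [← hGM, hcM, Matrix.mul_smul, mul_one])
  have hMN : M * (F⁻¹ * G) = 1 := by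
    rw [hMdef]
    calc G⁻¹ * F * (F⁻¹ * G) = G⁻¹ * (F * F⁻¹ * G) := by simp only [mul_assoc]
      _ = G⁻¹ * G := by rw [hFF', one_mul]
      _ = 1 := hGG
  have hNM : (F⁻¹ * G) * M = 1 := by
    rw [hMdef]
    calc F⁻¹ * G * (G⁻¹ * F) = F⁻¹ * (G * G⁻¹ * F) := by simp only [mul_assoc]
      _ = F⁻¹ * F := by rw [hGG', one_mul]
      _ = 1 := hFF
  refine ⟨H₀, hH0ne, htr0, hPT, hH0G, hH0F, ?_, hcomM, ?_⟩
  · intro H htrH _ hHG hHF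
    have h1 : Hᴴ = G * H * G⁻¹ := by rw [← hHG, mul_assoc, hGG', mul_one]
    have h2 : G * H * G⁻¹ * F = F * H := by rw [← h1]; exact hHF
    have hHM : H * M = M * H := by
      calc H * M = (G⁻¹ * G) * (H * (G⁻¹ * F)) := by rw [hGG, one_mul, hMdef]
        _ = G⁻¹ * (G * H * G⁻¹ * F) := by simp only [mul_assoc]
        _ = G⁻¹ * (F * H) := by rw [h2]
        _ = M * H := by rw [hMdef, mul_assoc]
    obtain ⟨z, hz⟩ := commutant2 M H hns htrH hHM
    rw [← hH0def] at hz
    have hGH0 : G * H₀ ≠ 0 := by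
      intro h
      apply hH0ne
      calc H₀ = (G⁻¹ * G) * H₀ := by rw [hGG, one_mul]
        _ = G⁻¹ * (G * H₀) := by rw [mul_assoc]
        _ = 0 := by rw [h, mul_zero]
    have hzz : star z = z := by
      have hA : Hᴴ * G = star z • (G * H₀) := by
        rw [hz, conjTranspose_smul, Matrix.smul_mul, hH0G]
      have hB : G * H = z • (G * H₀) := by rw [hz, Matrix.mul_smul]
      have hAB : star z • (G * H₀) = z • (G * H₀) := by rw [← hA, hHG, hB]
      have := sub_eq_zero.mpr hAB
      rw [← sub_smul] at this
      rcases smul_eq_zero.mp this with h | h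
      · exact sub_eq_zero.mp h
      · exact absurd h hGH0
    refine ⟨z.re, ?_⟩
    rw [hz]
    congr 1
    exact (Complex.ext (by simp) (by simp [Complex.conj_eq_iff_im.mp hzz])).symm
  · rw [hH0def, Matrix.sub_mul, Matrix.mul_sub, Matrix.smul_mul, Matrix.mul_smul,
      one_mul, mul_one, hMN, hNM]
end
end

section
/- Let G ∈ M₂(ℂ) be an invertible Hermitian matrix with Tr(G) = 0, and let H ∈ M₂(ℂ) be traceless with H†·G = G·H. Then H† also satisfies (H†)†·G = G·H†, and consequently H = A + B where A = (H + H†)/2 is a traceless Hermitian matrix satisfying A·G = G·A, and B = (H − H†)/2 is a traceless skew-Hermitian matrix (B† = −B) satisfying B†·G = G·B; in particular every traceless G-pseudo-Hermitian matrix is the sum of a Hermitian PT-symmetric matrix and an anti-Hermitian PT-symmetric matrix, each G-pseudo-Hermitian. -/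
open Matrix Complex

noncomputable section

lemma sq_of_traceless (G : Matrix (Fin 2) (Fin 2) ℂ) (h : G.trace = 0) :
    G * G = (-G.det) • 1 := by
  have ht : G 0 0 + G 1 1 = 0 := by simpa [Matrix.trace_fin_two] using h
  have h11 : G 1 1 = -G 0 0 := by linear_combination ht
  ext i j
  fin_cases i <;> fin_cases j <;>
    simp [Matrix.mul_apply, Fin.sum_univ_two, Matrix.det_fin_two, Matrix.one_apply, h11] <;>
    ring

/-- for invertible Hermitian `G` with `Tr(G) = 0` and traceless `H` with
`H†·G = G·H`, the matrix `H†` is also `G`-pseudo-Hermitian, and `H = A + B` where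
`A = (H + H†)/2` is traceless Hermitian with `A·G = G·A` and `B = (H − H†)/2` is
traceless skew-Hermitian with `B†·G = G·B`. -/
theorem stmt_18 (H G : Matrix (Fin 2) (Fin 2) ℂ)
    (hGherm : G.IsHermitian) (hGinv : IsUnit G.det) (hGtrace : G.trace = 0)
    (hHtrace : H.trace = 0)
    (hHG : Hᴴ * G = G * H) :
    Hᴴᴴ * G = G * Hᴴ ∧
    H = (2⁻¹ : ℂ) • (H + Hᴴ) + (2⁻¹ : ℂ) • (H - Hᴴ) ∧
    ((2⁻¹ : ℂ) • (H + Hᴴ)).trace = 0 ∧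
    ((2⁻¹ : ℂ) • (H + Hᴴ)).IsHermitian ∧
    ((2⁻¹ : ℂ) • (H + Hᴴ)) * G = G * ((2⁻¹ : ℂ) • (H + Hᴴ)) ∧
    ((2⁻¹ : ℂ) • (H - Hᴴ)).trace = 0 ∧
    ((2⁻¹ : ℂ) • (H - Hᴴ))ᴴ = -((2⁻¹ : ℂ) • (H - Hᴴ)) ∧
    ((2⁻¹ : ℂ) • (H - Hᴴ))ᴴ * G = G * ((2⁻¹ : ℂ) • (H - Hᴴ)) := by
  have hGsq : G * G = (-G.det) • 1 := sq_of_traceless G hGtrace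
  have hGu : IsUnit G := (Matrix.isUnit_iff_isUnit_det G).mpr hGinv
  have key : H * G = G * Hᴴ := by
    have h2 : H * G * G = G * Hᴴ * G := by
      calc H * G * G = H * (G * G) := by rw [mul_assoc]
        _ = (-G.det) • H := by rw [hGsq, Matrix.mul_smul, mul_one]
        _ = ((-G.det) • 1) * H := by rw [Matrix.smul_mul, one_mul]
        _ = G * G * H := by rw [hGsq]
        _ = G * (Hᴴ * G) := by rw [mul_assoc, hHG]
        _ = G * Hᴴ * G := by rw [mul_assoc]
    exact hGu.mul_right_cancel h2
  have hHtr' : Hᴴ.trace = 0 := by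
    rw [Matrix.trace_conjTranspose, hHtrace, star_zero]
  refine ⟨?_, ?_, ?_, ?_, ?_, ?_, ?_, ?_⟩
  · rw [Matrix.conjTranspose_conjTranspose]; exact key
  · rw [smul_add, smul_sub]; module
  · simp [hHtrace, hHtr']
  · unfold Matrix.IsHermitian
    rw [Matrix.conjTranspose_smul, Matrix.conjTranspose_add,
      Matrix.conjTranspose_conjTranspose]
    rw [show star (2⁻¹ : ℂ) = 2⁻¹ by norm_num]
    rw [add_comm]
  · rw [Matrix.smul_mul, Matrix.mul_smul, add_mul, mul_add, key, hHG, add_comm]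
  · simp [hHtrace, hHtr']
  · rw [Matrix.conjTranspose_smul, Matrix.conjTranspose_sub,
      Matrix.conjTranspose_conjTranspose,
      show star (2⁻¹ : ℂ) = 2⁻¹ by norm_num, smul_sub, smul_sub, neg_sub]
  · rw [Matrix.conjTranspose_smul, Matrix.conjTranspose_sub,
      Matrix.conjTranspose_conjTranspose,
      show star (2⁻¹ : ℂ) = 2⁻¹ by norm_num,
      Matrix.smul_mul, Matrix.mul_smul, sub_mul, mul_sub, hHG, key]
end
end

section
/- Let G ∈ M₂(ℂ) be Hermitian with det(G) > 0 (so G is invertible), and let H ∈ M₂(ℂ) be traceless with H†·G = G·H. Then det(H) is real, det(H) ≤ 0, and det(H) = 0 if and only if H = 0; in particular H² = (−det(H))·I with −det(H) ≥ 0, so every such H has real eigenvalues ±√(−det(H)) (unbroken PT-symmetry), and the quadratic form H ↦ det(H) is negative definite on the real vector space of traceless matrices satisfying H†·G = G·H. -/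
open Matrix Complex

noncomputable section

set_option maxHeartbeats 4000000

/-- for Hermitian `G` with `det(G) > 0` and traceless `H` with
`H†·G = G·H`: `det(H)` is real and nonpositive, `det(H) = 0` iff `H = 0`,
`H² = (−det H)·I`, and every eigenvalue of `H` is `±√(−det H)` — so the quadratic
form `H ↦ det(H)` is negative definite on the real vector space of such `H`. -/
theorem stmt_19 (H G : Matrix (Fin 2) (Fin 2) ℂ)
    (hGherm : G.IsHermitian) (hGdet : 0 < G.det.re)
    (hHtrace : H.trace = 0)
    (hHG : Hᴴ * G = G * H) :
    H.det.im = 0 ∧ H.det.re ≤ 0 ∧ (H.det = 0 ↔ H = 0) ∧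
    H * H = (-H.det) • (1 : Matrix (Fin 2) (Fin 2) ℂ) ∧
    ∀ μ ∈ spectrum ℂ H,
      μ = (Real.sqrt (-H.det.re) : ℂ) ∨ μ = -(Real.sqrt (-H.det.re) : ℂ) := by
  have h11 : H 1 1 = -(H 0 0) := by
    have h := hHtrace
    simp [Matrix.trace, Fin.sum_univ_two, Matrix.diag] at h
    linear_combination h
  have hg10 : G 1 0 = starRingEnd ℂ (G 0 1) := by
    have := congrFun (congrFun hGherm.symm 1) 0
    simpa [Matrix.conjTranspose_apply] using this
  have hg00 : (G 0 0).im = 0 := by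
    have := congrFun (congrFun hGherm 0) 0
    simp [Matrix.conjTranspose_apply, Complex.ext_iff] at this
    linarith [this]
  have hg11 : (G 1 1).im = 0 := by
    have := congrFun (congrFun hGherm 1) 1
    simp [Matrix.conjTranspose_apply, Complex.ext_iff] at this
    linarith [this]
  set x := (H 0 0).re with hx
  set y := (H 0 0).im with hy
  set b1 := (H 0 1).re with hb1
  set b2 := (H 0 1).im with hb2
  set c1 := (H 1 0).re with hc1
  set c2 := (H 1 0).im with hc2
  set g := (G 0 0).re with hgg
  set h := (G 1 1).re with hh
  set w1 := (G 0 1).re with hw1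
  set w2 := (G 0 1).im with hw2
  have hDG : 0 < g * h - w1^2 - w2^2 := by
    have := hGdet
    rw [Matrix.det_fin_two] at this
    simp [hg10, Complex.mul_re, Complex.conj_re, Complex.conj_im, hg00, hg11] at this
    simp only [← hx, ← hy, ← hb1, ← hb2, ← hc1, ← hc2, ← hgg, ← hh, ← hw1, ← hw2] at this
    nlinarith [this]
  have hg0 : g ≠ 0 := by
    intro h0; rw [h0] at hDG; nlinarith [sq_nonneg w1, sq_nonneg w2]
  have hg2 : 0 < g^2 := by positivity
  have e00 : (starRingEnd ℂ (H 0 0)) * G 0 0 + (starRingEnd ℂ (H 1 0)) * G 1 0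
      = G 0 0 * H 0 0 + G 0 1 * H 1 0 := by
    have := congrFun (congrFun hHG 0) 0
    simpa [Matrix.mul_apply, Fin.sum_univ_two, Matrix.conjTranspose_apply] using this
  have e01 : (starRingEnd ℂ (H 0 0)) * G 0 1 + (starRingEnd ℂ (H 1 0)) * G 1 1
      = G 0 0 * H 0 1 + G 0 1 * H 1 1 := by
    have := congrFun (congrFun hHG 0) 1
    simpa [Matrix.mul_apply, Fin.sum_univ_two, Matrix.conjTranspose_apply] using this
  have eA : w1*c2 + w2*c1 = -(g*y) := by
    have := congrArg Complex.im e00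
    simp [hg10, Complex.add_im, Complex.mul_im, Complex.conj_re, Complex.conj_im, hg00] at this
    simp only [← hx, ← hy, ← hb1, ← hb2, ← hc1, ← hc2, ← hgg, ← hh, ← hw1, ← hw2] at this
    linarith [this]
  have eB : g*b1 = 2*x*w1 + h*c1 := by
    have := congrArg Complex.re e01
    simp [h11, Complex.add_re, Complex.mul_re, Complex.neg_re, Complex.neg_im,
      Complex.conj_re, Complex.conj_im, hg00, hg11] at this
    simp only [← hx, ← hy, ← hb1, ← hb2, ← hc1, ← hc2, ← hgg, ← hh, ← hw1, ← hw2] at this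
    linarith [this]
  have eC : g*b2 = 2*x*w2 - h*c2 := by
    have := congrArg Complex.im e01
    simp [h11, Complex.add_im, Complex.mul_im, Complex.neg_re, Complex.neg_im,
      Complex.conj_re, Complex.conj_im, hg00, hg11] at this
    simp only [← hx, ← hy, ← hb1, ← hb2, ← hc1, ← hc2, ← hgg, ← hh, ← hw1, ← hw2] at this
    linarith [this]
  -- the key identity
  have hkey : g^2*(x^2 - y^2 + b1*c1 - b2*c2)
      = (g*x + w1*c1 - w2*c2)^2 + (g*h - w1^2 - w2^2)*(c1^2 + c2^2) := by
    linear_combination (g*c1)*eB + (-(g*c2))*eC + (w1*c2 + w2*c1 - g*y)*eA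
  have hzim : 2*x*y + b1*c2 + b2*c1 = 0 := by
    have hz : g*(2*x*y + b1*c2 + b2*c1) = 0 := by
      linear_combination c2*eB + c1*eC + 2*x*eA
    rcases mul_eq_zero.mp hz with h0 | h0
    · exact absurd h0 hg0
    · exact h0
  have hdetre : H.det.re = -(x^2 - y^2 + b1*c1 - b2*c2) := by
    rw [Matrix.det_fin_two]
    simp [h11, Complex.mul_re, Complex.neg_re, Complex.neg_im]
    ring
  have hdetim : H.det.im = -(2*x*y + b1*c2 + b2*c1) := by
    rw [Matrix.det_fin_two]
    simp [h11, Complex.mul_im, Complex.neg_re, Complex.neg_im]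
    ring
  have him0 : H.det.im = 0 := by rw [hdetim, hzim]; ring
  have hQ : 0 ≤ x^2 - y^2 + b1*c1 - b2*c2 := by
    nlinarith [hkey, sq_nonneg (g*x + w1*c1 - w2*c2), sq_nonneg c1, sq_nonneg c2,
      mul_nonneg hDG.le (add_nonneg (sq_nonneg c1) (sq_nonneg c2)), hg2]
  have hre0 : H.det.re ≤ 0 := by rw [hdetre]; linarith
  -- det = 0 iff H = 0
  have hiff : H.det = 0 ↔ H = 0 := by
    constructor
    · intro hd
      have hQ0 : x^2 - y^2 + b1*c1 - b2*c2 = 0 := by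
        have := congrArg Complex.re hd
        rw [hdetre] at this
        simp at this
        linarith
      have hcc : c1^2 + c2^2 = 0 := by
        nlinarith [hkey, sq_nonneg (g*x + w1*c1 - w2*c2), sq_nonneg c1, sq_nonneg c2,
          mul_nonneg hDG.le (add_nonneg (sq_nonneg c1) (sq_nonneg c2)), hDG]
      have hc10 : c1 = 0 := by
        have h1 : c1^2 = 0 := by nlinarith [sq_nonneg c2]
        exact pow_eq_zero_iff (by norm_num : (2:ℕ) ≠ 0) |>.mp h1
      have hc20 : c2 = 0 := by
        have h1 : c2^2 = 0 := by nlinarith [sq_nonneg c1]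
        exact pow_eq_zero_iff (by norm_num : (2:ℕ) ≠ 0) |>.mp h1
      have hx0 : x = 0 := by
        have hs : (g*x + w1*c1 - w2*c2)^2 = 0 := by nlinarith [hkey, sq_nonneg (g*x + w1*c1 - w2*c2)]
        have := pow_eq_zero_iff (n := 2) (by norm_num) |>.mp hs
        rw [hc10, hc20] at this
        have : g * x = 0 := by linarith
        rcases mul_eq_zero.mp this with h0 | h0
        · exact absurd h0 hg0
        · exact h0
      have hy0 : y = 0 := by
        have : g * y = 0 := by rw [hc10, hc20] at eA; linarith
        rcases mul_eq_zero.mp this with h0 | h0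
        · exact absurd h0 hg0
        · exact h0
      have hb10 : b1 = 0 := by
        have : g * b1 = 0 := by rw [eB, hc10, hx0]; ring
        rcases mul_eq_zero.mp this with h0 | h0
        · exact absurd h0 hg0
        · exact h0
      have hb20 : b2 = 0 := by
        have : g * b2 = 0 := by rw [eC, hc20, hx0]; ring
        rcases mul_eq_zero.mp this with h0 | h0
        · exact absurd h0 hg0
        · exact h0
      have hH00 : H 0 0 = 0 := by apply Complex.ext <;> simp [← hx, ← hy, hx0, hy0]
      have hH01 : H 0 1 = 0 := by apply Complex.ext <;> simp [← hb1, ← hb2, hb10, hb20]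
      have hH10 : H 1 0 = 0 := by apply Complex.ext <;> simp [← hc1, ← hc2, hc10, hc20]
      have hH11 : H 1 1 = 0 := by rw [h11, hH00]; simp
      ext i j
      fin_cases i <;> fin_cases j <;> simp only [Matrix.zero_apply]
      · exact hH00
      · exact hH01
      · exact hH10
      · exact hH11
    · intro hd; rw [hd]; simp
  -- Cayley–Hamilton
  have hCH : H * H = (-H.det) • (1 : Matrix (Fin 2) (Fin 2) ℂ) := by
    ext i j
    rw [Matrix.det_fin_two]
    fin_cases i <;> fin_cases j <;>
      simp [Matrix.mul_apply, Fin.sum_univ_two, Matrix.smul_apply, Matrix.one_apply, h11] <;>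
      ring
  refine ⟨him0, hre0, hiff, hCH, ?_⟩
  -- spectrum
  intro μ hμ
  rw [spectrum.mem_iff] at hμ
  have hdet0 : (algebraMap ℂ (Matrix (Fin 2) (Fin 2) ℂ) μ - H).det = 0 := by
    by_contra hne
    exact hμ ((Matrix.isUnit_iff_isUnit_det _).mpr (isUnit_iff_ne_zero.mpr hne))
  rw [Matrix.det_fin_two] at hdet0
  simp [Matrix.sub_apply, Matrix.algebraMap_matrix_apply, h11] at hdet0
  have hsq : μ^2 = -H.det := by
    rw [Matrix.det_fin_two, h11]
    linear_combination hdet0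
  set r := Real.sqrt (-H.det.re) with hr
  have hrsq : ((r:ℂ))^2 = -H.det := by
    have h1 : (0:ℝ) ≤ -H.det.re := by linarith [hre0]
    have h2 : r^2 = -H.det.re := Real.sq_sqrt h1
    rw [← Complex.ofReal_pow, h2]
    apply Complex.ext
    · simp
    · simp [him0]
  have hfac : (μ - r) * (μ + r) = 0 := by linear_combination hsq - hrsq
  rcases mul_eq_zero.mp hfac with h0 | h0
  · left; linear_combination h0
  · right; linear_combination h0
end
end
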